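/- arXiv:1408.3328 — 5 statements merged into one kernel-verified Lean document; each statement's English description precedes it below -/
import Mathlib

section
/- There exist constants C, K > 0 depending only on C_f, γ_f, C_b, γ_b, c_b such that for every ε ∈ (0,1] the solution u of the singularly perturbed problem satisfies ‖u⁽ⁿ⁾‖_{L²(0,1)} ≤ C Kⁿ (max{n+1, ε⁻¹})ⁿ for all n ∈ ℕ₀. -/
open MeasureTheory Set

/-- The `L²` norm of `g` over a set `s ⊆ ℝ`. -/
noncomputable def L2N (g : ℝ → ℝ) (s : Set ℝ) : ℝ :=
  Real.sqrt (∫ x in s, (g x) ^ 2)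

/-- `v` coincides on `s` with a polynomial of degree at most `p`. -/
def PolyOn (p : ℕ) (v : ℝ → ℝ) (s : Set ℝ) : Prop :=
  ∃ q : Polynomial ℝ, q.natDegree ≤ p ∧ ∀ x ∈ s, v x = q.eval x

/-- Membership in the space `S(λ,p)` of continuous piecewise polynomials of degree ≤ p
on the Spectral Boundary Layer mesh `Δ_BL(λ,p)`. -/
def MemS (lam ε : ℝ) (p : ℕ) (v : ℝ → ℝ) : Prop :=
  ContinuousOn v (Icc 0 1) ∧
  (lam * p * ε < 1 / 4 →
    PolyOn p v (Icc 0 (lam * p * ε)) ∧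
    PolyOn p v (Icc (lam * p * ε) (1 - lam * p * ε)) ∧
    PolyOn p v (Icc (1 - lam * p * ε) 1)) ∧
  (1 / 4 ≤ lam * p * ε → PolyOn p v (Icc 0 1))

/-- Membership in `S₀(λ,p) = S(λ,p) ∩ H¹₀`. -/
def MemS0 (lam ε : ℝ) (p : ℕ) (v : ℝ → ℝ) : Prop :=
  MemS lam ε p v ∧ v 0 = 0 ∧ v 1 = 0

/-- Analyticity-type hypotheses on the data `b`, `f`. -/
def DataHyp (Cf γf Cb γb cb : ℝ) (b f : ℝ → ℝ) : Prop :=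
  ContDiff ℝ (⊤ : ℕ∞) b ∧ ContDiff ℝ (⊤ : ℕ∞) f ∧
  (∀ n : ℕ, ∀ x ∈ Icc (0:ℝ) 1, |iteratedDeriv n f x| ≤ Cf * γf ^ n * n.factorial) ∧
  (∀ n : ℕ, ∀ x ∈ Icc (0:ℝ) 1, |iteratedDeriv n b x| ≤ Cb * γb ^ n * n.factorial) ∧
  ∀ x ∈ Icc (0:ℝ) 1, cb ≤ b x

/-- `u` is the (smooth) solution of `-ε² u'' + b u = f` on `(0,1)` with `u(0)=u(1)=0`. -/
def IsSolution (ε : ℝ) (b f u : ℝ → ℝ) : Prop :=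
  ContDiff ℝ (⊤ : ℕ∞) u ∧
  (∀ x ∈ Ioo (0:ℝ) 1, -(ε ^ 2) * iteratedDeriv 2 u x + b x * u x = f x) ∧
  u 0 = 0 ∧ u 1 = 0

/-- The energy norm `‖g‖_E = sqrt(ε² ‖g'‖² + ∫ b g²)`. -/
noncomputable def energyNorm (ε : ℝ) (b g : ℝ → ℝ) : ℝ :=
  Real.sqrt (ε ^ 2 * (∫ x in Ioo (0:ℝ) 1, (deriv g x) ^ 2)
    + ∫ x in Ioo (0:ℝ) 1, b x * (g x) ^ 2)

/-- `uF` is the Galerkin approximation from `S₀(λ,p)`. -/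
def IsGalerkin (lam ε : ℝ) (p : ℕ) (b f uF : ℝ → ℝ) : Prop :=
  MemS0 lam ε p uF ∧ ∀ v : ℝ → ℝ, MemS0 lam ε p v →
    ε ^ 2 * (∫ x in Ioo (0:ℝ) 1, deriv uF x * deriv v x)
      + (∫ x in Ioo (0:ℝ) 1, b x * uF x * v x)
      = ∫ x in Ioo (0:ℝ) 1, f x * v x

/-- The boundary-layer region `I_ε`. -/
def Ieps (lam ε : ℝ) (p : ℕ) : Set ℝ :=
  Icc 0 (lam * p * ε) ∪ Icc (1 - lam * p * ε) 1

/-- Membership in `S_ε`: functions of `S(λ,p)` vanishing outside `I_ε`. -/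
def MemSeps (lam ε : ℝ) (p : ℕ) (v : ℝ → ℝ) : Prop :=
  MemS lam ε p v ∧ ∀ x ∈ Icc (0:ℝ) 1 \ Ieps lam ε p, v x = 0

/-- `Pz = P₀ z`, the `B₀`-projection of `z` onto `S₀(λ,p)`. -/
def IsP0 (b : ℝ → ℝ) (lam ε : ℝ) (p : ℕ) (z Pz : ℝ → ℝ) : Prop :=
  MemS0 lam ε p Pz ∧ ∀ v : ℝ → ℝ, MemS0 lam ε p v →
    ∫ x in Ioo (0:ℝ) 1, b x * (z x - Pz x) * v x = 0

/-- Supremum norm over a set. -/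
noncomputable def supN (g : ℝ → ℝ) (s : Set ℝ) : ℝ := ⨆ x ∈ s, |g x|


section AuxiliaryLemmas
open Filter Topology

set_option maxHeartbeats 1000000 in
lemma smooth_iter {u : ℝ → ℝ} (hu : ContDiff ℝ (⊤:ℕ∞) u) (n : ℕ) :
    ContDiff ℝ (⊤:ℕ∞) (iteratedDeriv n u) := by
  rw [iteratedDeriv_eq_iterate]; exact ContDiff.iterate_deriv n hu

set_option maxHeartbeats 1000000 in
lemma second_deriv_test' {v : ℝ → ℝ} {x0 : ℝ} (hv : ContDiff ℝ (⊤:ℕ∞) v)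
    (hmax : IsLocalMax v x0) : deriv (deriv v) x0 ≤ 0 := by
  by_contra hpos
  push_neg at hpos
  have h1 : deriv v x0 = 0 := hmax.deriv_eq_zero
  have hd1 : ContDiff ℝ (⊤:ℕ∞) (deriv v) := by
    have := smooth_iter hv 1
    rwa [iteratedDeriv_one] at this
  have hd2 : HasDerivAt (deriv v) (deriv (deriv v) x0) x0 :=
    ((hd1.differentiable (by simp)).differentiableAt).hasDerivAt
  have hslope := hasDerivAt_iff_tendsto_slope.mp hd2
  have hev : ∀ᶠ y in 𝓝[>] x0, 0 < slope (deriv v) x0 y := by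
    have h' : Tendsto (slope (deriv v) x0) (𝓝[>] x0) (𝓝 (deriv (deriv v) x0)) :=
      hslope.mono_left (nhdsWithin_mono _ (fun y hy => ne_of_gt hy))
    exact h'.eventually (eventually_gt_nhds hpos)
  have hev2 : ∀ᶠ y in 𝓝[>] x0, 0 < deriv v y := by
    filter_upwards [hev, self_mem_nhdsWithin] with y hy hy'
    have hyx : (0:ℝ) < y - x0 := sub_pos.mpr hy'
    have : slope (deriv v) x0 y * (y - x0) = deriv v y := by
      rw [slope_def_field]; field_simp [h1]; simp [h1]
    nlinarith
  have hev3 : ∀ᶠ y in 𝓝[>] x0, v y ≤ v x0 := (hmax.filter_mono nhdsWithin_le_nhds)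
  obtain ⟨a, ha, hsub⟩ := mem_nhdsGT_iff_exists_Ioo_subset.mp (hev2.and hev3)
  have hamem : a ∈ Ioi x0 := ha
  set c := (x0 + a) / 2 with hc
  have hx0c : x0 < c := by simp only [hc]; linarith [mem_Ioi.mp hamem]
  have hca : c < a := by simp only [hc]; linarith [mem_Ioi.mp hamem]
  have hmono : StrictMonoOn v (Icc x0 c) := by
    apply strictMonoOn_of_deriv_pos (convex_Icc x0 c) hv.continuous.continuousOn
    intro y hy
    rw [interior_Icc] at hy
    exact (hsub ⟨hy.1, lt_trans hy.2 hca⟩).1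
  have hlt : v x0 < v c := hmono (left_mem_Icc.mpr hx0c.le) (right_mem_Icc.mpr hx0c.le) hx0c
  exact absurd (hsub ⟨hx0c, hca⟩).2 (not_le.mpr hlt)

set_option maxHeartbeats 1000000 in
lemma max_principle' {b f u : ℝ → ℝ} {ε Cf cb : ℝ} (hε : 0 < ε) (hcb : 0 < cb) (hCf : 0 < Cf)
    (hu : ContDiff ℝ (⊤:ℕ∞) u)
    (hlb : ∀ x ∈ Icc (0:ℝ) 1, cb ≤ b x)
    (hfb : ∀ x ∈ Icc (0:ℝ) 1, |f x| ≤ Cf)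
    (heq : ∀ x ∈ Ioo (0:ℝ) 1, -(ε ^ 2) * iteratedDeriv 2 u x + b x * u x = f x)
    (hu0 : u 0 = 0) (hu1 : u 1 = 0) :
    ∀ x ∈ Icc (0:ℝ) 1, |u x| ≤ Cf / cb := by
  have hD2 : ∀ w : ℝ, iteratedDeriv 2 u w = deriv (deriv u) w := by
    intro w
    simp [iteratedDeriv_succ, iteratedDeriv_one]
  obtain ⟨x0, hx0, hmax⟩ := isCompact_Icc.exists_isMaxOn (nonempty_Icc.mpr zero_le_one)
    ((continuous_abs.comp hu.continuous).continuousOn : ContinuousOn (fun x => |u x|) (Icc 0 1))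
  intro x hx
  have hle : |u x| ≤ |u x0| := hmax hx
  rcases le_or_gt (|u x0|) (Cf / cb) with h | h
  · exact hle.trans h
  · exfalso
    have hpos : 0 < |u x0| := lt_trans (div_pos hCf hcb) h
    have hne : u x0 ≠ 0 := fun h0 => by simp [h0] at hpos
    have hx0I : x0 ∈ Ioo (0:ℝ) 1 := by
      have hx00 : x0 ≠ 0 := fun h0 => hne (by rw [h0]; exact hu0)
      have hx01 : x0 ≠ 1 := fun h1 => hne (by rw [h1]; exact hu1)
      exact ⟨hx0.1.lt_of_ne (Ne.symm hx00), hx0.2.lt_of_ne hx01⟩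
    have hnhds : Icc (0:ℝ) 1 ∈ 𝓝 x0 := mem_nhds_iff.mpr ⟨Ioo 0 1, Ioo_subset_Icc_self, isOpen_Ioo, hx0I⟩
    have heqx := heq x0 hx0I
    rw [hD2] at heqx
    have hbx := hlb x0 hx0
    have hfx := hfb x0 hx0
    have hCfcb : Cf < cb * |u x0| := (div_lt_iff₀' hcb).mp h
    rcases hne.lt_or_gt with hneg | hposi
    · -- u x0 < 0 : -u has local max at x0
      have habs : |u x0| = -(u x0) := abs_of_neg hneg
      have hmax' : IsLocalMax (fun y => -u y) x0 := by
        apply Filter.eventually_of_mem hnhds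
        intro y hy
        have : |u y| ≤ |u x0| := hmax hy
        simp only
        have h1 := neg_abs_le (u y)
        linarith
      have htest := second_deriv_test' hu.neg hmax'
      have hder : deriv (deriv fun y => -u y) x0 = -(deriv (deriv u) x0) := by
        have e1 : (deriv fun y => -u y) = fun y => -(deriv u y) := by
          ext y; exact deriv.neg
        rw [e1]
        exact deriv.neg
      rw [hder] at htest
      -- ε² u'' = b u - f ;  b u ≤ cb * u x0 = -cb |u x0| < -Cf ≤ -f ⇒ u'' < 0, but htest says u'' ≥ 0
      have hbu : b x0 * u x0 ≤ cb * u x0 := by nlinarith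
      have habs' : u x0 = -|u x0| := by rw [habs]; ring
      have hd2 : (0:ℝ) ≤ deriv (deriv u) x0 := by linarith
      nlinarith [neg_abs_le (f x0), mul_nonneg (sq_nonneg ε) hd2]
    · -- 0 < u x0
      have habs : |u x0| = u x0 := abs_of_pos hposi
      have hmax' : IsLocalMax u x0 := by
        apply Filter.eventually_of_mem hnhds
        intro y hy
        have : |u y| ≤ |u x0| := hmax hy
        rw [habs] at this
        exact le_trans (le_abs_self _) this
      have htest := second_deriv_test' hu hmax'
      have hbu : cb * u x0 ≤ b x0 * u x0 := by nlinarith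
      nlinarith [le_abs_self (f x0), sq_nonneg ε, mul_nonneg (mul_nonneg hε.le hε.le) (neg_nonneg.mpr htest)]

set_option maxHeartbeats 1000000 in
lemma deriv1_bound' {u : ℝ → ℝ} (hu : ContDiff ℝ (⊤:ℕ∞) u) {ε A0 A2 : ℝ}
    (hε0 : 0 < ε) (hε1 : ε ≤ 1) (hA0 : 0 ≤ A0) (hA2 : 0 ≤ A2)
    (h0 : ∀ x ∈ Icc (0:ℝ) 1, |u x| ≤ A0)
    (h2 : ∀ x ∈ Ioo (0:ℝ) 1, |deriv (deriv u) x| ≤ A2 / ε ^ 2) :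
    ∀ x ∈ Ioo (0:ℝ) 1, |deriv u x| ≤ (4 * A0 + A2) / ε := by
  intro x hx
  have hdu : ∀ t, HasDerivAt u (deriv u t) t :=
    fun t => ((hu.differentiable (by simp)).differentiableAt).hasDerivAt
  have hdu1 : ContDiff ℝ (⊤:ℕ∞) (deriv u) := by
    have : iteratedDeriv 1 u = deriv u := iteratedDeriv_one
    rw [← this, iteratedDeriv_eq_iterate]
    exact ContDiff.iterate_deriv 1 hu
  have hddu : ∀ t, HasDerivAt (deriv u) (deriv (deriv u) t) t :=
    fun t => ((hdu1.differentiable (by simp)).differentiableAt).hasDerivAt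
  rcases le_or_gt x (1/2) with hhalf | hhalf
  · -- y = x + ε/2
    set y := x + ε / 2 with hy
    have hxy : x < y := by simp only [hy]; linarith
    have hyI : y ∈ Icc (0:ℝ) 1 := ⟨by nlinarith [hx.1], by simp only [hy]; linarith⟩
    obtain ⟨η, hη, hηeq⟩ := exists_hasDerivAt_eq_slope u (deriv u) hxy
      (hu.continuous.continuousOn) (fun t _ => hdu t)
    obtain ⟨ξ, hξ, hξeq⟩ := exists_hasDerivAt_eq_slope (deriv u) (deriv (deriv u)) hη.1
      (hdu1.continuous.continuousOn) (fun t _ => hddu t)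
    have hηI : η ∈ Ioo (0:ℝ) 1 := ⟨lt_trans hx.1 hη.1, lt_of_lt_of_le hη.2 hyI.2⟩
    have hξI : ξ ∈ Ioo (0:ℝ) 1 := ⟨lt_trans hx.1 hξ.1, lt_trans hξ.2 hηI.2⟩
    have hb2 := h2 ξ hξI
    have hbx := h0 x (Ioo_subset_Icc_self hx)
    have hby := h0 y hyI
    have hyx : y - x = ε / 2 := by simp [hy]
    -- deriv u x = deriv u η - (deriv (deriv u) ξ) * (η - x)
    have hηx0 : η - x ≠ 0 := ne_of_gt (sub_pos.mpr hη.1)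
    have e1 : deriv u x = deriv u η - deriv (deriv u) ξ * (η - x) := by
      rw [hξeq, div_mul_cancel₀ _ hηx0]; ring
    have hηb : |deriv u η| ≤ 2 * A0 / (ε / 2) := by
      rw [hηeq, hyx, abs_div, abs_of_pos (by positivity : (0:ℝ) < ε / 2)]
      gcongr
      calc |u y - u x| ≤ |u y| + |u x| := abs_sub _ _
        _ ≤ 2 * A0 := by linarith
    have hηx : |η - x| ≤ ε / 2 := by
      rw [abs_of_pos (sub_pos.mpr hη.1)]
      have := hη.2
      simp only [hy] at this
      linarith
    calc |deriv u x| ≤ |deriv u η| + |deriv (deriv u) ξ| * |η - x| := by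
          rw [e1]
          calc |deriv u η - deriv (deriv u) ξ * (η - x)|
              ≤ |deriv u η| + |deriv (deriv u) ξ * (η - x)| := abs_sub _ _
            _ = |deriv u η| + |deriv (deriv u) ξ| * |η - x| := by rw [abs_mul]
      _ ≤ 2 * A0 / (ε / 2) + (A2 / ε ^ 2) * (ε / 2) := by
          gcongr
      _ = (4 * A0 + A2 / 2) / ε := by field_simp; ring
      _ ≤ (4 * A0 + A2) / ε := by gcongr <;> linarith
  · -- y = x - ε/2
    set y := x - ε / 2 with hy
    have hxy : y < x := by simp only [hy]; linarith
    have hyI : y ∈ Icc (0:ℝ) 1 := ⟨by simp only [hy]; linarith, by nlinarith [hx.2]⟩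
    obtain ⟨η, hη, hηeq⟩ := exists_hasDerivAt_eq_slope u (deriv u) hxy
      (hu.continuous.continuousOn) (fun t _ => hdu t)
    obtain ⟨ξ, hξ, hξeq⟩ := exists_hasDerivAt_eq_slope (deriv u) (deriv (deriv u)) hη.2
      (hdu1.continuous.continuousOn) (fun t _ => hddu t)
    have hηI : η ∈ Ioo (0:ℝ) 1 := ⟨lt_of_le_of_lt hyI.1 hη.1, lt_trans hη.2 hx.2⟩
    have hξI : ξ ∈ Ioo (0:ℝ) 1 := ⟨lt_trans hηI.1 hξ.1, lt_trans hξ.2 hx.2⟩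
    have hb2 := h2 ξ hξI
    have hbx := h0 x (Ioo_subset_Icc_self hx)
    have hby := h0 y hyI
    have hyx : x - y = ε / 2 := by simp [hy]
    have hηx0 : x - η ≠ 0 := ne_of_gt (sub_pos.mpr hη.2)
    have e1 : deriv u x = deriv u η + deriv (deriv u) ξ * (x - η) := by
      rw [hξeq, div_mul_cancel₀ _ hηx0]; ring
    have hηb : |deriv u η| ≤ 2 * A0 / (ε / 2) := by
      rw [hηeq, hyx, abs_div, abs_of_pos (by positivity : (0:ℝ) < ε / 2)]
      gcongr
      calc |u x - u y| ≤ |u x| + |u y| := abs_sub _ _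
        _ ≤ 2 * A0 := by linarith
    have hηx : |x - η| ≤ ε / 2 := by
      rw [abs_of_pos (sub_pos.mpr hη.2)]
      have := hη.1
      simp only [hy] at this
      linarith
    calc |deriv u x| ≤ |deriv u η| + |deriv (deriv u) ξ| * |x - η| := by
          rw [e1]
          calc |deriv u η + deriv (deriv u) ξ * (x - η)|
              ≤ |deriv u η| + |deriv (deriv u) ξ * (x - η)| := abs_add_le _ _
            _ = |deriv u η| + |deriv (deriv u) ξ| * |x - η| := by rw [abs_mul]
      _ ≤ 2 * A0 / (ε / 2) + (A2 / ε ^ 2) * (ε / 2) := by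
          gcongr
      _ = (4 * A0 + A2 / 2) / ε := by field_simp; ring
      _ ≤ (4 * A0 + A2) / ε := by gcongr <;> linarith

set_option maxHeartbeats 1000000 in
lemma L2N_le_of_bound {g : ℝ → ℝ} (hg : Continuous g) {B : ℝ} (hB : 0 ≤ B)
    (h : ∀ x ∈ Ioo (0:ℝ) 1, |g x| ≤ B) : L2N g (Ioo 0 1) ≤ B := by
  rw [L2N]
  have hint : IntegrableOn (fun x => (g x) ^ 2) (Ioo (0:ℝ) 1) :=
    ((hg.pow 2).integrableOn_Icc).mono_set Ioo_subset_Icc_self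
  have h1 : (∫ x in Ioo (0:ℝ) 1, (g x) ^ 2) ≤ ∫ _x in Ioo (0:ℝ) 1, B ^ 2 := by
    apply setIntegral_mono_on hint (integrableOn_const ?_) measurableSet_Ioo
    · intro x hx
      have h2 := abs_le.mp (h x hx)
      nlinarith [h2.1, h2.2]
    · rw [Real.volume_Ioo]
      norm_num
  have h2 : (∫ _x in Ioo (0:ℝ) 1, B ^ 2) = B ^ 2 := by
    rw [setIntegral_const]
    rw [Real.volume_real_Ioo]
    norm_num
  calc Real.sqrt (∫ x in Ioo (0:ℝ) 1, (g x) ^ 2) ≤ Real.sqrt (B ^ 2) :=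
        Real.sqrt_le_sqrt (h1.trans_eq h2)
    _ = B := Real.sqrt_sq hB

set_option maxHeartbeats 1000000 in
lemma geom_half {r : ℝ} (hr0 : 0 ≤ r) (hr : r ≤ 1 / 2) (N : ℕ) :
    ∑ i ∈ Finset.range N, r ^ i ≤ 2 := by
  calc ∑ i ∈ Finset.range N, r ^ i ≤ ∑ i ∈ Finset.range N, (1 / 2 : ℝ) ^ i :=
        Finset.sum_le_sum fun i _ => pow_le_pow_left₀ hr0 hr i
    _ ≤ 2 := sum_geometric_two_le N

end AuxiliaryLemmas

set_option maxHeartbeats 1000000 in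
/-- derivative bounds for the solution, uniform in ε. -/
theorem statement0 (Cf γf Cb γb cb : ℝ)
    (hCf : 0 < Cf) (hγf : 0 < γf) (hCb : 0 < Cb) (hγb : 0 < γb) (hcb : 0 < cb) :
    ∃ C K : ℝ, 0 < C ∧ 0 < K ∧
      ∀ b f : ℝ → ℝ, DataHyp Cf γf Cb γb cb b f →
      ∀ ε : ℝ, ε ∈ Ioc (0:ℝ) 1 →
      ∀ u : ℝ → ℝ, IsSolution ε b f u →
      ∀ n : ℕ,
        L2N (iteratedDeriv n u) (Ioo 0 1) ≤ C * K ^ n * max ((n:ℝ) + 1) ε⁻¹ ^ n := by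
  have hA0pos : 0 < Cf / cb := div_pos hCf hcb
  set A0 : ℝ := Cf / cb with hA0def
  set A2 : ℝ := Cb * A0 + Cf with hA2def
  have hA2pos : 0 < A2 := by positivity
  set C : ℝ := Cf + A0 + (4 * A0 + A2) + 1 with hCdef
  set K : ℝ := 2 + γf + 2 * γb + 2 * Real.sqrt Cb with hKdef
  have hsqnn : 0 ≤ Real.sqrt Cb := Real.sqrt_nonneg _
  have hsq2 : Real.sqrt Cb ^ 2 = Cb := Real.sq_sqrt hCb.le
  have hC0 : 0 < C := by positivity
  have hK0 : 0 < K := by positivity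
  have hK2 : 2 ≤ K := by nlinarith
  have hKγf : γf ≤ K := by nlinarith
  have hKγb : 2 * γb ≤ K := by nlinarith
  have hKCb : 4 * Cb ≤ K ^ 2 := by nlinarith
  have hCf_le_C : Cf ≤ C := by nlinarith
  have hA0_le_C : A0 ≤ C := by nlinarith
  have hA1_le_C : 4 * A0 + A2 ≤ C := by nlinarith
  have hstepC : 2 * C * Cb + Cf ≤ C * K ^ 2 := by
    have h1 : 0 ≤ C * (K ^ 2 - 4 * Cb) := mul_nonneg hC0.le (by linarith)
    have h2 : 0 ≤ C * (K ^ 2 - 4) := mul_nonneg hC0.le (by nlinarith)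
    nlinarith
  refine ⟨C, K, hC0, hK0, ?_⟩
  intro b f hD ε hε u hu n
  obtain ⟨hbs, hfs, hfb, hbb, hblb⟩ := hD
  obtain ⟨hus, heq, hu0, hu1⟩ := hu
  have hε0 : 0 < ε := hε.1
  have hε1 : ε ≤ 1 := hε.2
  have hεinv1 : 1 ≤ ε⁻¹ := (one_le_inv₀ hε0).mpr hε1
  have hus' : ContDiff ℝ (⊤:ℕ∞) u := hus.of_le (by simp)
  have hbs' : ContDiff ℝ (⊤:ℕ∞) b := hbs.of_le (by simp)
  have hfs' : ContDiff ℝ (⊤:ℕ∞) f := hfs.of_le (by simp)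
  have hf0 : ∀ x ∈ Icc (0:ℝ) 1, |f x| ≤ Cf := by
    intro x hx; have := hfb 0 x hx; simpa using this
  have hb0 : ∀ x ∈ Icc (0:ℝ) 1, |b x| ≤ Cb := by
    intro x hx; have := hbb 0 x hx; simpa using this
  -- base bound on u
  have hA0b : ∀ x ∈ Icc (0:ℝ) 1, |u x| ≤ A0 :=
    max_principle' hε0 hcb hCf hus' hblb hf0 heq hu0 hu1
  -- second derivative formula
  have hD2eq : ∀ x ∈ Ioo (0:ℝ) 1, deriv (deriv u) x = (ε ^ 2)⁻¹ * (b x * u x - f x) := by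
    intro x hx
    have h := heq x hx
    have h2 : iteratedDeriv 2 u x = deriv (deriv u) x := by
      simp [iteratedDeriv_succ, iteratedDeriv_one]
    rw [h2] at h
    have hε2 : (ε:ℝ) ^ 2 ≠ 0 := by positivity
    field_simp
    linarith
  have hA2b : ∀ x ∈ Ioo (0:ℝ) 1, |deriv (deriv u) x| ≤ A2 / ε ^ 2 := by
    intro x hx
    rw [hD2eq x hx]
    have h1 := hb0 x (Ioo_subset_Icc_self hx)
    have h2 := hA0b x (Ioo_subset_Icc_self hx)
    have hbd : |b x * u x - f x| ≤ A2 := by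
      calc |b x * u x - f x| ≤ |b x * u x| + |f x| := abs_sub _ _
        _ = |b x| * |u x| + |f x| := by rw [abs_mul]
        _ ≤ Cb * A0 + Cf := by
            have := hf0 x (Ioo_subset_Icc_self hx)
            have hbnn : (0:ℝ) ≤ |b x| := abs_nonneg _
            have hunn : (0:ℝ) ≤ |u x| := abs_nonneg _
            nlinarith
        _ = A2 := hA2def.symm
    calc |(ε ^ 2)⁻¹ * (b x * u x - f x)| = (ε ^ 2)⁻¹ * |b x * u x - f x| := by
          rw [abs_mul, abs_of_pos (by positivity : (0:ℝ) < (ε ^ 2)⁻¹)]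
      _ ≤ (ε ^ 2)⁻¹ * A2 := mul_le_mul_of_nonneg_left hbd (by positivity)
      _ = A2 / ε ^ 2 := by rw [div_eq_mul_inv]; ring
  have hA1b : ∀ x ∈ Ioo (0:ℝ) 1, |deriv u x| ≤ (4 * A0 + A2) / ε :=
    deriv1_bound' hus' hε0 hε1 hA0pos.le hA2pos.le hA0b hA2b
  -- pointwise key bound
  have key : ∀ N : ℕ, ∀ x ∈ Ioo (0:ℝ) 1,
      |iteratedDeriv N u x| ≤ C * K ^ N * max ((N:ℝ) + 1) ε⁻¹ ^ N := by
    intro N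
    induction N using Nat.strong_induction_on with
    | _ N ih =>
      match N, ih with
      | 0, _ =>
        intro x hx
        have := hA0b x (Ioo_subset_Icc_self hx)
        simpa using le_trans this hA0_le_C
      | 1, _ =>
        intro x hx
        have h1 := hA1b x hx
        rw [iteratedDeriv_one]
        have e1 : (4 * A0 + A2) / ε = (4 * A0 + A2) * ε⁻¹ := div_eq_mul_inv _ _
        have hmaxnn : ε⁻¹ ≤ max ((1:ℝ) + 1) ε⁻¹ := le_max_right _ _
        calc |deriv u x| ≤ (4 * A0 + A2) * ε⁻¹ := by rw [← e1]; exact h1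
          _ ≤ (C * K) * max ((1:ℝ) + 1) ε⁻¹ := by
              apply mul_le_mul ?_ hmaxnn (inv_nonneg.mpr hε0.le) (by positivity)
              have h2 : C * 1 ≤ C * K := mul_le_mul_of_nonneg_left (by linarith) hC0.le
              linarith
          _ = C * K ^ 1 * max ((1:ℝ) + 1) ε⁻¹ ^ 1 := by ring
          _ = C * K ^ 1 * max (((1:ℕ):ℝ) + 1) ε⁻¹ ^ 1 := by norm_num
      | (m + 2), ih =>
        intro x hx
        set M : ℝ := max ((m:ℝ) + 3) ε⁻¹ with hMdef
        have hMcast : ((((m:ℕ) + 2 : ℕ)):ℝ) + 1 = (m:ℝ) + 3 := by push_cast; ring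
        have hM1 : 1 ≤ M := le_trans hεinv1 (le_max_right _ _)
        have hM0 : 0 ≤ M := le_trans zero_le_one hM1
        have hMε : ε⁻¹ ≤ M := le_max_right _ _
        have hMm : (m:ℝ) + 3 ≤ M := le_max_left _ _
        -- rewrite the iterated derivative via the equation
        have hEqOn : Set.EqOn (deriv (deriv u))
            (fun y => (ε ^ 2)⁻¹ * (b y * u y - f y)) (Ioo 0 1) := fun y hy => hD2eq y hy
        have hstep1 : iteratedDeriv (m + 2) u x
            = iteratedDeriv m (fun y => (ε ^ 2)⁻¹ * (b y * u y - f y)) x := by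
          have e : iteratedDeriv (m + 2) u = iteratedDeriv m (deriv (deriv u)) := by
            rw [iteratedDeriv_succ', iteratedDeriv_succ']
          rw [e]
          exact hEqOn.iteratedDeriv_of_isOpen isOpen_Ioo m hx
        have hbu : ContDiff ℝ (⊤:ℕ∞) (fun y => b y * u y) := hbs'.mul hus'
        have hsubC : ContDiff ℝ (⊤:ℕ∞) (fun y => b y * u y - f y) := hbu.sub hfs'
        have hstep2 : iteratedDeriv m (fun y => (ε ^ 2)⁻¹ * (b y * u y - f y)) x
            = (ε ^ 2)⁻¹ * iteratedDeriv m (fun y => b y * u y - f y) x := by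
          rw [← iteratedDerivWithin_univ, ← iteratedDerivWithin_univ]
          exact iteratedDerivWithin_const_mul (mem_univ x) uniqueDiffOn_univ _
            (hsubC.contDiffWithinAt.of_le (by exact_mod_cast le_top))
        have hstep3 : iteratedDeriv m (fun y => b y * u y - f y) x
            = iteratedDeriv m (fun y => b y * u y) x - iteratedDeriv m f x := by
          have h1 : (fun y => b y * u y - f y) = (fun y => b y * u y) - f := rfl
          rw [h1, ← iteratedDerivWithin_univ, ← iteratedDerivWithin_univ,
            ← iteratedDerivWithin_univ]
          exact iteratedDerivWithin_sub (mem_univ x) uniqueDiffOn_univ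
            (hbu.contDiffWithinAt.of_le (by exact_mod_cast le_top)) (hfs'.contDiffWithinAt.of_le (by exact_mod_cast le_top))
        -- Leibniz bound for the product
        have hmul : |iteratedDeriv m (fun y => b y * u y) x| ≤
            ∑ i ∈ Finset.range (m + 1),
              (m.choose i : ℝ) * |iteratedDeriv i b x| * |iteratedDeriv (m - i) u x| := by
          have h := norm_iteratedFDeriv_mul_le (𝕜 := ℝ) hbs hus x (by exact_mod_cast (le_top : (m : ℕ∞) ≤ ⊤) : (m : WithTop ℕ∞) ≤ ((⊤ : ℕ∞) : WithTop ℕ∞))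
          simpa [norm_iteratedFDeriv_eq_norm_iteratedDeriv, Real.norm_eq_abs] using h
        -- termwise bound
        have hterm : ∀ i ∈ Finset.range (m + 1),
            (m.choose i : ℝ) * |iteratedDeriv i b x| * |iteratedDeriv (m - i) u x| ≤
              (C * Cb * (K ^ m * M ^ m)) * (γb / K) ^ i := by
          intro i hi
          have him : i ≤ m := Nat.lt_succ_iff.mp (Finset.mem_range.mp hi)
          have hbbd := hbb i x (Ioo_subset_Icc_self hx)
          have hubd := ih (m - i) (by omega) x hx
          -- old max ≤ M
          have hmaxle : max (((m - i : ℕ):ℝ) + 1) ε⁻¹ ≤ M := by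
            apply max_le ?_ hMε
            have : ((m - i : ℕ):ℝ) ≤ (m:ℝ) := Nat.cast_le.mpr (Nat.sub_le m i)
            linarith
          have hmaxnn : (0:ℝ) ≤ max (((m - i : ℕ):ℝ) + 1) ε⁻¹ :=
            le_trans (by positivity) (le_max_left _ _)
          have hubd2 : |iteratedDeriv (m - i) u x| ≤ C * K ^ (m - i) * M ^ (m - i) := by
            refine hubd.trans ?_
            have hple := pow_le_pow_left₀ hmaxnn hmaxle (m - i)
            gcongr
          -- descFactorial
          have hdesc : (m.choose i : ℝ) * (i.factorial : ℝ) ≤ (m:ℝ) ^ i := by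
            have h1 : (m.descFactorial i : ℕ) = i.factorial * m.choose i :=
              Nat.descFactorial_eq_factorial_mul_choose m i
            have h2 : m.descFactorial i ≤ m ^ i := Nat.descFactorial_le_pow m i
            have h3 : (i.factorial * m.choose i : ℕ) ≤ m ^ i := h1 ▸ h2
            calc (m.choose i : ℝ) * (i.factorial : ℝ) = ((i.factorial * m.choose i : ℕ) : ℝ) := by
                  push_cast; ring
              _ ≤ ((m ^ i : ℕ) : ℝ) := Nat.cast_le.mpr h3
              _ = (m:ℝ) ^ i := by push_cast; ring
          have hmM : (m:ℝ) ^ i ≤ M ^ i := by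
            apply pow_le_pow_left₀ (Nat.cast_nonneg m)
            linarith
          have hKpow : γb ^ i * K ^ (m - i) = (γb / K) ^ i * K ^ m := by
            rw [div_pow, div_mul_eq_mul_div, ← pow_sub_mul_pow K him]
            field_simp
          have hbnn : (0:ℝ) ≤ |iteratedDeriv i b x| := abs_nonneg _
          have hunn : (0:ℝ) ≤ |iteratedDeriv (m - i) u x| := abs_nonneg _
          calc (m.choose i : ℝ) * |iteratedDeriv i b x| * |iteratedDeriv (m - i) u x|
              ≤ (m.choose i : ℝ) * (Cb * γb ^ i * (i.factorial : ℝ)) *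
                (C * K ^ (m - i) * M ^ (m - i)) := by
                have hc : (0:ℝ) ≤ (m.choose i : ℝ) := Nat.cast_nonneg _
                apply mul_le_mul (mul_le_mul le_rfl hbbd hbnn hc) hubd2 hunn
                positivity
            _ = Cb * C * ((m.choose i : ℝ) * (i.factorial : ℝ)) * γb ^ i *
                (K ^ (m - i) * M ^ (m - i)) := by ring
            _ ≤ Cb * C * (M ^ i) * γb ^ i * (K ^ (m - i) * M ^ (m - i)) := by
                have h4 : (m.choose i : ℝ) * (i.factorial : ℝ) ≤ M ^ i := hdesc.trans hmM
                have hXnn : (0:ℝ) ≤ Cb * C * γb ^ i * (K ^ (m - i) * M ^ (m - i)) := by positivity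
                calc Cb * C * ((m.choose i : ℝ) * (i.factorial : ℝ)) * γb ^ i *
                      (K ^ (m - i) * M ^ (m - i))
                    = (Cb * C * γb ^ i * (K ^ (m - i) * M ^ (m - i))) *
                      ((m.choose i : ℝ) * (i.factorial : ℝ)) := by ring
                  _ ≤ (Cb * C * γb ^ i * (K ^ (m - i) * M ^ (m - i))) * M ^ i :=
                      mul_le_mul_of_nonneg_left h4 hXnn
                  _ = Cb * C * (M ^ i) * γb ^ i * (K ^ (m - i) * M ^ (m - i)) := by ring
            _ = (Cb * C) * (γb ^ i * K ^ (m - i)) * (M ^ i * M ^ (m - i)) := by ring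
            _ = (C * Cb * (K ^ m * M ^ m)) * (γb / K) ^ i := by
                rw [hKpow, ← pow_add, Nat.add_sub_cancel' him]
                ring
        have hsum : ∑ i ∈ Finset.range (m + 1),
            (m.choose i : ℝ) * |iteratedDeriv i b x| * |iteratedDeriv (m - i) u x| ≤
              2 * C * Cb * (K ^ m * M ^ m) := by
          calc ∑ i ∈ Finset.range (m + 1),
              (m.choose i : ℝ) * |iteratedDeriv i b x| * |iteratedDeriv (m - i) u x|
              ≤ ∑ i ∈ Finset.range (m + 1), (C * Cb * (K ^ m * M ^ m)) * (γb / K) ^ i :=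
                Finset.sum_le_sum hterm
            _ = (C * Cb * (K ^ m * M ^ m)) * ∑ i ∈ Finset.range (m + 1), (γb / K) ^ i := by
                rw [Finset.mul_sum]
            _ ≤ (C * Cb * (K ^ m * M ^ m)) * 2 := by
                apply mul_le_mul_of_nonneg_left ?_ (by positivity)
                apply geom_half (by positivity)
                rw [div_le_iff₀ hK0]
                linarith
            _ = 2 * C * Cb * (K ^ m * M ^ m) := by ring
        -- f-term bound
        have hfterm : |iteratedDeriv m f x| ≤ Cf * (K ^ m * M ^ m) := by
          have h1 := hfb m x (Ioo_subset_Icc_self hx)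
          have hfact : ((m.factorial : ℕ) : ℝ) ≤ M ^ m := by
            calc ((m.factorial : ℕ) : ℝ) ≤ ((m ^ m : ℕ) : ℝ) :=
                  Nat.cast_le.mpr (Nat.factorial_le_pow m)
              _ = (m:ℝ) ^ m := by push_cast; ring
              _ ≤ M ^ m := pow_le_pow_left₀ (Nat.cast_nonneg m) (by linarith) m
          have hγ : γf ^ m ≤ K ^ m := pow_le_pow_left₀ hγf.le hKγf m
          calc |iteratedDeriv m f x| ≤ Cf * γf ^ m * (m.factorial : ℝ) := h1
            _ ≤ Cf * K ^ m * (m.factorial : ℝ) := by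
                apply mul_le_mul_of_nonneg_right ?_ (Nat.cast_nonneg _)
                exact mul_le_mul_of_nonneg_left hγ hCf.le
            _ ≤ Cf * K ^ m * M ^ m :=
                mul_le_mul_of_nonneg_left hfact (by positivity)
            _ = Cf * (K ^ m * M ^ m) := by ring
        -- assemble
        have hεM : (ε ^ 2)⁻¹ ≤ M ^ 2 := by
          have : (ε ^ 2)⁻¹ = (ε⁻¹) ^ 2 := by rw [inv_pow]
          rw [this]
          exact pow_le_pow_left₀ (inv_nonneg.mpr hε0.le) hMε 2
        have hbig : |iteratedDeriv (m + 2) u x| ≤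
            M ^ 2 * ((2 * C * Cb + Cf) * (K ^ m * M ^ m)) := by
          rw [hstep1, hstep2, hstep3, abs_mul, abs_inv, abs_pow, abs_of_pos hε0]
          have htri : |iteratedDeriv m (fun y => b y * u y) x - iteratedDeriv m f x| ≤
              2 * C * Cb * (K ^ m * M ^ m) + Cf * (K ^ m * M ^ m) :=
            le_trans (abs_sub _ _) (by linarith [hmul.trans hsum, hfterm])
          calc (ε ^ 2)⁻¹ * |iteratedDeriv m (fun y => b y * u y) x - iteratedDeriv m f x|
              ≤ M ^ 2 * (2 * C * Cb * (K ^ m * M ^ m) + Cf * (K ^ m * M ^ m)) := by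
                apply mul_le_mul hεM htri (abs_nonneg _) (by positivity)
            _ = M ^ 2 * ((2 * C * Cb + Cf) * (K ^ m * M ^ m)) := by ring
        calc |iteratedDeriv (m + 2) u x|
            ≤ M ^ 2 * ((2 * C * Cb + Cf) * (K ^ m * M ^ m)) := hbig
          _ ≤ M ^ 2 * ((C * K ^ 2) * (K ^ m * M ^ m)) := by
              apply mul_le_mul_of_nonneg_left ?_ (by positivity)
              apply mul_le_mul_of_nonneg_right hstepC (by positivity)
          _ = C * K ^ (m + 2) * M ^ (m + 2) := by ring
          _ = C * K ^ (m + 2) * max ((((m + 2 : ℕ)):ℝ) + 1) ε⁻¹ ^ (m + 2) := by rw [hMdef, hMcast]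
  -- conclude via L² vs sup
  have hcont : Continuous (iteratedDeriv n u) := (smooth_iter hus' n).continuous
  have hmaxnn : (0:ℝ) ≤ max ((n:ℝ) + 1) ε⁻¹ := le_trans (by positivity) (le_max_left _ _)
  have hB : (0:ℝ) ≤ C * K ^ n * max ((n:ℝ) + 1) ε⁻¹ ^ n := by
    apply mul_nonneg (by positivity) (pow_nonneg hmaxnn n)
  exact L2N_le_of_bound hcont hB (key n)
end

section
/- There exists a constant C > 0 depending only on sup_{x∈[0,1]} b(x) and inf_{x∈[0,1]} b(x) such that for all λ > 0, p ∈ ℕ and ε ∈ (0,1] with λpε < 1/4, and for all u ∈ S₁ and v ∈ S_ε, the strengthened Cauchy–Schwarz inequality |∫₀¹ b(x) u(x) v(x) dx| ≤ C min{1, √(λpε)·p} ‖u‖_{L²(0,1)} ‖v‖_{L²(I_ε)} holds. -/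
open MeasureTheory Set

section SBLAux
open Polynomial intervalIntegral

lemma polyII (P : Polynomial ℝ) (a b : ℝ) :
    IntervalIntegrable (fun x => P.eval x) volume a b :=
  (P.continuous_aeval).intervalIntegrable a b

lemma poly_int_deriv (R : Polynomial ℝ) :
    ∫ x in (0:ℝ)..1, (derivative R).eval x = R.eval 1 - R.eval 0 := by
  rw [show (fun x => (derivative R).eval x) = deriv (fun x => R.eval x) by
    funext x; rw [Polynomial.deriv]]
  exact integral_deriv_eq_sub (fun x _ => R.differentiableAt) (by
    rw [show deriv (fun x => R.eval x) = fun x => (derivative R).eval x by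
      funext x; rw [Polynomial.deriv]]
    exact polyII _ 0 1)

lemma poly_ibp (P Q : Polynomial ℝ) :
    ∫ x in (0:ℝ)..1, (derivative P).eval x * Q.eval x
      = P.eval 1 * Q.eval 1 - P.eval 0 * Q.eval 0
        - ∫ x in (0:ℝ)..1, P.eval x * (derivative Q).eval x := by
  have h := poly_int_deriv (P * Q)
  rw [derivative_mul] at h
  have h2 : ∫ x in (0:ℝ)..1, ((derivative P * Q).eval x + (P * derivative Q).eval x)
      = (∫ x in (0:ℝ)..1, (derivative P).eval x * Q.eval x)
        + ∫ x in (0:ℝ)..1, P.eval x * (derivative Q).eval x := by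
    rw [intervalIntegral.integral_add (polyII _ 0 1) (polyII _ 0 1)]
    simp [eval_mul]
  rw [show (fun x => (derivative P * Q + P * derivative Q).eval x)
      = fun x => ((derivative P * Q).eval x + (P * derivative Q).eval x) by
    funext x; simp [eval_add]] at h
  rw [h2] at h
  simp only [eval_mul] at h
  linarith

lemma iter_deriv_root (a : ℝ) : ∀ (k m : ℕ) (R : Polynomial ℝ), k ≤ m →
    (derivative^[k] ((X - C a) ^ (m + 1) * R)).eval a = 0 := by
  intro k
  induction k with
  | zero => intro m R _; simp
  | succ k ih =>
    intro m R hkm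
    obtain ⟨m', rfl⟩ : ∃ m', m = m' + 1 := ⟨m - 1, by omega⟩
    rw [Function.iterate_succ_apply]
    have hd : derivative ((X - C a) ^ (m' + 1 + 1) * R)
        = (X - C a) ^ (m' + 1) * ((C ((m' : ℝ) + 2)) * R + (X - C a) * derivative R) := by
      rw [derivative_mul, derivative_pow]
      simp only [derivative_sub, derivative_X, derivative_C, sub_zero, mul_one]
      push_cast
      ring
    rw [hd]
    exact ih m' _ (by omega)

noncomputable def Qp (n j : ℕ) : Polynomial ℝ := X ^ j * (1 - X) ^ n

lemma Qp_eval0 (n j k : ℕ) (hk : k ≤ j) :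
    (derivative^[k] (Qp n (j + 1))).eval 0 = 0 := by
  have : Qp n (j+1) = (X - C (0:ℝ)) ^ (j + 1) * (1 - X) ^ n := by
    simp [Qp]
  rw [this]
  exact iter_deriv_root 0 k j _ hk

lemma Qp_eval1 (n j k : ℕ) (hk : k + 1 ≤ n) :
    (derivative^[k] (Qp n j)).eval 1 = 0 := by
  obtain ⟨n', rfl⟩ : ∃ n', n = n' + 1 := ⟨n - 1, by omega⟩
  have : Qp (n'+1) j = (X - C (1:ℝ)) ^ (n' + 1) * (C ((-1:ℝ)^(n'+1)) * X ^ j) := by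
    unfold Qp
    rw [show (1 - X : Polynomial ℝ) = C (-1 : ℝ) * (X - C 1) by ring_nf; simp [C_neg]; ring,
      mul_pow, ← C_pow]
    ring
  rw [this]
  exact iter_deriv_root 1 k n' _ (by omega)

-- Leibniz for X * Q
lemma iter_deriv_X_mul (Q : Polynomial ℝ) : ∀ j : ℕ,
    derivative^[j + 1] (X * Q) = X * derivative^[j + 1] Q + (j + 1 : ℕ) • derivative^[j] Q := by
  intro j
  induction j with
  | zero => simp [derivative_mul]; ring
  | succ j ih =>
    rw [Function.iterate_succ_apply', ih, derivative_add, derivative_mul, derivative_X,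
      one_mul, ← Function.iterate_succ_apply' derivative]
    rw [show derivative ((j + 1 : ℕ) • derivative^[j] Q) = (j+1:ℕ) • derivative^[j+1] Q by
      rw [derivative_smul, Function.iterate_succ_apply']]
    push_cast [succ_nsmul]
    ring

noncomputable def Bker (n : ℕ) : ℕ → Polynomial ℝ
  | 0 => (1 - X) ^ n
  | (j+1) => derivative^[j+1] (Qp n (j+1)) + (j+1 : ℕ) • Bker n j

lemma X_mul_Bker (n : ℕ) : ∀ j : ℕ, X * Bker n j = derivative^[j] (Qp n (j + 1)) := by
  intro j
  induction j with
  | zero => simp [Bker, Qp]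
  | succ j ih =>
    have hQ : X * Qp n (j + 1) = Qp n (j + 2) := by unfold Qp; ring
    rw [Bker, mul_add, mul_smul_comm, ih, ← iter_deriv_X_mul, hQ]

lemma int_deriv_Qp_eq_zero (n j : ℕ) (h1 : j + 1 ≤ n) :
    ∫ x in (0:ℝ)..1, (derivative^[j + 1] (Qp n (j + 1))).eval x = 0 := by
  rw [Function.iterate_succ_apply', poly_int_deriv, Qp_eval1 n (j+1) j h1,
    Qp_eval0 n j j le_rfl, sub_zero]

lemma int_Bker (n : ℕ) : ∀ j : ℕ, j ≤ n →
    ∫ x in (0:ℝ)..1, (Bker n j).eval x = (j.factorial : ℝ) / (n + 1) := by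
  intro j
  induction j with
  | zero =>
    intro _
    have : (fun x : ℝ => ((1 - X : Polynomial ℝ) ^ n).eval x) = fun x : ℝ => (1 - x) ^ n := by
      funext x; simp
    rw [Bker, this, intervalIntegral.integral_comp_sub_left (fun x => x ^ n) 1]
    norm_num [integral_pow]
  | succ j ih =>
    intro hj
    have : (fun x : ℝ => (Bker n (j+1)).eval x)
        = fun x => (derivative^[j+1] (Qp n (j+1))).eval x + ((j:ℝ)+1) * (Bker n j).eval x := by
      funext x; simp [Bker]
    rw [this, intervalIntegral.integral_add (polyII _ 0 1) ((polyII (Bker n j) 0 1).const_mul _),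
      int_deriv_Qp_eq_zero n j hj, zero_add, intervalIntegral.integral_const_mul,
      ih (by omega)]
    rw [Nat.factorial_succ]
    have : ((n:ℝ) + 1) ≠ 0 := by positivity
    field_simp
    push_cast
    ring

lemma eval0_deriv_Qp (n j : ℕ) :
    (derivative^[j+1] (Qp n (j+1))).eval 0 = ((j+1).factorial : ℝ) := by
  rw [← Polynomial.coeff_zero_eq_eval_zero, Polynomial.coeff_iterate_derivative]
  have h1 : (Qp n (j+1)).coeff (0 + (j+1)) = 1 := by
    unfold Qp
    rw [show X ^ (j+1) * (1 - X : Polynomial ℝ) ^ n = (1 - X : Polynomial ℝ) ^ n * X ^ (j+1) by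
      ring]
    rw [show (0 + (j+1)) = 0 + (j+1) from rfl]
    rw [Polynomial.coeff_mul_X_pow]
    simp [Polynomial.coeff_zero_eq_eval_zero]
  rw [h1]
  simp only [Nat.zero_add, Nat.descFactorial_self, nsmul_eq_mul, mul_one]

lemma eval0_Bker (n : ℕ) : ∀ j : ℕ, (Bker n j).eval 0 = ((j+1).factorial : ℝ) := by
  intro j
  induction j with
  | zero => simp [Bker]
  | succ j ih =>
    rw [Bker, Polynomial.eval_add, eval0_deriv_Qp]
    have hs : ((j+1:ℕ) • Bker n j).eval 0 = ((j:ℝ)+1) * (Bker n j).eval 0 := by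
      rw [Polynomial.eval_smul, nsmul_eq_mul]
      push_cast
      ring
    rw [hs, ih, Nat.factorial_succ (j+1)]
    push_cast
    ring

lemma moment_zero (n : ℕ) : ∀ (m k : ℕ), m < k → k ≤ n →
    ∫ x in (0:ℝ)..1, (derivative^[k] (Qp n (n+1))).eval x * x ^ m = 0 := by
  intro m
  induction m with
  | zero =>
    intro k hmk hkn
    obtain ⟨k', rfl⟩ : ∃ k', k = k' + 1 := ⟨k - 1, by omega⟩
    simp only [pow_zero, mul_one]
    rw [Function.iterate_succ_apply', poly_int_deriv,
      Qp_eval1 n (n+1) k' (by omega), Qp_eval0 n n k' (by omega), sub_zero]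
  | succ m ih =>
    intro k hmk hkn
    obtain ⟨k', rfl⟩ : ∃ k', k = k' + 1 := ⟨k - 1, by omega⟩
    have h1 : ∫ x in (0:ℝ)..1, (derivative^[k'+1] (Qp n (n+1))).eval x * x ^ (m+1)
        = ∫ x in (0:ℝ)..1, (derivative (derivative^[k'] (Qp n (n+1)))).eval x
            * (X ^ (m+1) : Polynomial ℝ).eval x := by
      rw [Function.iterate_succ_apply']
      congr 1
      funext x
      simp
    rw [h1, poly_ibp, Qp_eval1 n (n+1) k' (by omega), Qp_eval0 n n k' (by omega)]
    have h2 : ∫ x in (0:ℝ)..1,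
        (derivative^[k'] (Qp n (n+1))).eval x * (derivative (X ^ (m+1) : Polynomial ℝ)).eval x
        = ((m:ℝ)+1) * ∫ x in (0:ℝ)..1, (derivative^[k'] (Qp n (n+1))).eval x * x ^ m := by
      rw [← intervalIntegral.integral_const_mul]
      congr 1
      funext x
      rw [Polynomial.derivative_X_pow]
      push_cast
      simp
      ring
    rw [h2, ih k' (by omega) (by omega)]
    ring

lemma int_Bker_moment (n m : ℕ) (hm : m ≤ n) :
    ∫ x in (0:ℝ)..1, (Bker n n).eval x * x ^ m
      = if m = 0 then (n.factorial : ℝ) / (n + 1) else 0 := by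
  cases m with
  | zero => simpa using int_Bker n n le_rfl
  | succ m =>
    have h1 : (fun x : ℝ => (Bker n n).eval x * x ^ (m+1))
        = fun x : ℝ => (derivative^[n] (Qp n (n+1))).eval x * x ^ m := by
      funext x
      rw [← X_mul_Bker]
      simp
      ring
    simp only [Nat.succ_ne_zero, if_false]
    rw [h1, moment_zero n m n (by omega) le_rfl]

lemma reproducing (n : ℕ) (q : Polynomial ℝ) (hq : q.natDegree ≤ n) :
    ∫ x in (0:ℝ)..1, (Bker n n).eval x * q.eval x
      = q.eval 0 * ((n.factorial : ℝ) / (n + 1)) := by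
  have h1 : (fun x : ℝ => (Bker n n).eval x * q.eval x)
      = fun x : ℝ => ∑ m ∈ Finset.range (n+1), q.coeff m * ((Bker n n).eval x * x ^ m) := by
    funext x
    rw [Polynomial.eval_eq_sum_range' (by omega : q.natDegree < n + 1) x, Finset.mul_sum]
    congr 1
    funext m
    ring
  rw [h1, intervalIntegral.integral_finset_sum]
  · have h2 : ∀ m ∈ Finset.range (n+1),
        (∫ x in (0:ℝ)..1, q.coeff m * ((Bker n n).eval x * x ^ m))
          = if m = 0 then q.coeff 0 * ((n.factorial : ℝ) / (n+1)) else 0 := by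
      intro m hm
      rw [intervalIntegral.integral_const_mul, int_Bker_moment n m (by
        simp at hm; omega)]
      split
      · subst ‹m = 0›; rfl
      · ring
    rw [Finset.sum_congr rfl h2, Finset.sum_ite_eq' (Finset.range (n+1)) 0]
    simp [Polynomial.coeff_zero_eq_eval_zero]
  · intro m _
    exact (continuous_const.mul ((Bker n n).continuous_aeval.mul (continuous_pow m))).intervalIntegrable 0 1


lemma cs_poly (P Q : Polynomial ℝ) :
    (∫ x in (0:ℝ)..1, P.eval x * Q.eval x) ^ 2
      ≤ (∫ x in (0:ℝ)..1, P.eval x ^ 2) * ∫ x in (0:ℝ)..1, Q.eval x ^ 2 := by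
  have iQ2 : IntervalIntegrable (fun x : ℝ => Q.eval x ^ 2) volume 0 1 :=
    ((Q.continuous_aeval.pow 2)).intervalIntegrable 0 1
  have iP2 : IntervalIntegrable (fun x : ℝ => P.eval x ^ 2) volume 0 1 :=
    ((P.continuous_aeval.pow 2)).intervalIntegrable 0 1
  have iPQ : IntervalIntegrable (fun x : ℝ => P.eval x * Q.eval x) volume 0 1 :=
    ((P.continuous_aeval.mul Q.continuous_aeval)).intervalIntegrable 0 1
  have key : ∀ t : ℝ, 0 ≤ (∫ x in (0:ℝ)..1, Q.eval x ^ 2) * (t * t)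
      + (2 * ∫ x in (0:ℝ)..1, P.eval x * Q.eval x) * t + ∫ x in (0:ℝ)..1, P.eval x ^ 2 := by
    intro t
    have h0 : 0 ≤ ∫ x in (0:ℝ)..1, (P.eval x + t * Q.eval x) ^ 2 := by
      apply intervalIntegral.integral_nonneg (by norm_num)
      intro x _
      positivity
    have h1 : ∫ x in (0:ℝ)..1, (P.eval x + t * Q.eval x) ^ 2
        = (∫ x in (0:ℝ)..1, Q.eval x ^ 2) * (t * t)
          + (2 * ∫ x in (0:ℝ)..1, P.eval x * Q.eval x) * t
          + ∫ x in (0:ℝ)..1, P.eval x ^ 2 := by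
      have hfn : (fun x : ℝ => (P.eval x + t * Q.eval x) ^ 2)
          = fun x : ℝ => (Q.eval x ^ 2 * (t * t) + (P.eval x * Q.eval x) * (2 * t))
            + P.eval x ^ 2 := by
        funext x; ring
      rw [hfn, intervalIntegral.integral_add ((iQ2.mul_const _).add (iPQ.mul_const _)) iP2,
        intervalIntegral.integral_add (iQ2.mul_const _) (iPQ.mul_const _),
        intervalIntegral.integral_mul_const, intervalIntegral.integral_mul_const]
      ring
    linarith [h1 ▸ h0]
  have hd := discrim_le_zero key
  unfold discrim at hd
  nlinarith [hd]

lemma natDegree_Bker (n : ℕ) : (Bker n n).natDegree ≤ n := by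
  by_cases hB : Bker n n = 0
  · simp [hB]
  have h1 : (X * Bker n n).natDegree ≤ n + 1 := by
    rw [X_mul_Bker]
    calc (derivative^[n] (Qp n (n+1))).natDegree ≤ (Qp n (n+1)).natDegree - n :=
          Polynomial.natDegree_iterate_derivative _ _
      _ ≤ n + 1 := by
          have : (Qp n (n+1)).natDegree ≤ (n+1) + n := by
            unfold Qp
            refine le_trans (Polynomial.natDegree_mul_le) ?_
            have hx : (X ^ (n+1) : Polynomial ℝ).natDegree ≤ n + 1 := by
              simp
            have h2 : ((1 - X : Polynomial ℝ) ^ n).natDegree ≤ n := by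
              refine le_trans (Polynomial.natDegree_pow_le) ?_
              have h3 : (1 - X : Polynomial ℝ).natDegree ≤ 1 := by
                refine le_trans (Polynomial.natDegree_sub_le _ _) ?_
                simp
              nlinarith [h3]
            omega
          omega
  have h2 : (X * Bker n n).natDegree = 1 + (Bker n n).natDegree := by
    rw [Polynomial.natDegree_mul Polynomial.X_ne_zero hB, Polynomial.natDegree_X]
  omega

theorem endpoint_ineq (n : ℕ) (q : Polynomial ℝ) (hq : q.natDegree ≤ n) :
    (q.eval 0) ^ 2 ≤ ((n : ℝ) + 1) ^ 2 * ∫ x in (0:ℝ)..1, q.eval x ^ 2 := by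
  have hint : 0 ≤ ∫ x in (0:ℝ)..1, q.eval x ^ 2 := by
    apply intervalIntegral.integral_nonneg (by norm_num)
    intro x _
    positivity
  have hN : (0:ℝ) < (n:ℝ) + 1 := by positivity
  have hF : (0:ℝ) < (n.factorial : ℝ) := by positivity
  have hrep := reproducing n q hq
  have hnorm : ∫ x in (0:ℝ)..1, (Bker n n).eval x ^ 2 = ((n.factorial : ℝ)) ^ 2 := by
    have h := reproducing n (Bker n n) (natDegree_Bker n)
    rw [eval0_Bker n n] at h
    rw [show (fun x : ℝ => (Bker n n).eval x ^ 2)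
        = fun x : ℝ => (Bker n n).eval x * (Bker n n).eval x by funext x; ring, h,
      Nat.factorial_succ]
    push_cast
    field_simp
  have hcs := cs_poly (Bker n n) q
  rw [hrep, hnorm] at hcs
  have key : (n.factorial:ℝ)^2 * (q.eval 0)^2
      ≤ (n.factorial:ℝ)^2 * (((n:ℝ)+1)^2 * ∫ x in (0:ℝ)..1, q.eval x ^ 2) := by
    have h4 := mul_le_mul_of_nonneg_right hcs (by positivity : (0:ℝ) ≤ ((n:ℝ)+1)^2)
    calc (n.factorial:ℝ)^2 * (q.eval 0)^2
        = (q.eval 0 * ((n.factorial:ℝ)/((n:ℝ)+1)))^2 * ((n:ℝ)+1)^2 := by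
          field_simp
      _ ≤ (n.factorial:ℝ)^2 * (∫ x in (0:ℝ)..1, q.eval x ^ 2) * ((n:ℝ)+1)^2 := h4
      _ = (n.factorial:ℝ)^2 * (((n:ℝ)+1)^2 * ∫ x in (0:ℝ)..1, q.eval x ^ 2) := by ring
  exact le_of_mul_le_mul_left key (by positivity)

lemma half_ineq (n : ℕ) (q : Polynomial ℝ) (hq : q.natDegree ≤ n) (x₀ : ℝ)
    (h0 : 0 ≤ x₀) (h1 : x₀ ≤ 1/2) :
    (q.eval x₀) ^ 2 ≤ 2 * ((n:ℝ)+1)^2 * ∫ x in (0:ℝ)..1, q.eval x ^ 2 := by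
  set s : ℝ := 1 - x₀ with hs_def
  have hs0 : s ≠ 0 := by simp [hs_def]; intro h; linarith
  have hshalf : 1/2 ≤ s := by simp [hs_def]; linarith
  set qt : Polynomial ℝ := q.comp (C s * X + C x₀) with hqt_def
  have hdeg : qt.natDegree ≤ n := by
    refine le_trans Polynomial.natDegree_comp_le ?_
    have hl : (C s * X + C x₀ : Polynomial ℝ).natDegree ≤ 1 := by
      refine le_trans (Polynomial.natDegree_add_le _ _) ?_
      simp [Polynomial.natDegree_C_mul_le]
      exact le_trans (Polynomial.natDegree_mul_le) (by simp)
    calc q.natDegree * (C s * X + C x₀ : Polynomial ℝ).natDegree ≤ q.natDegree * 1 :=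
          Nat.mul_le_mul_left _ hl
      _ ≤ n := by omega
  have heval : ∀ y : ℝ, qt.eval y = q.eval (s * y + x₀) := by
    intro y; simp [hqt_def, Polynomial.eval_comp]
  have h2 := endpoint_ineq n qt hdeg
  rw [heval 0] at h2
  simp only [mul_zero, zero_add] at h2
  have hintq : IntervalIntegrable (fun x : ℝ => q.eval x ^ 2) volume x₀ 1 :=
    (q.continuous_aeval.pow 2).intervalIntegrable _ _
  have h3 : ∫ x in (0:ℝ)..1, qt.eval x ^ 2
      = s⁻¹ * ∫ x in x₀..1, q.eval x ^ 2 := by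
    have : (fun x : ℝ => qt.eval x ^ 2) = fun x : ℝ => (fun z => q.eval z ^ 2) (s * x + x₀) := by
      funext x; rw [heval]
    rw [this, intervalIntegral.integral_comp_mul_add (fun z => q.eval z ^ 2) hs0 x₀]
    norm_num [hs_def]
  have h4 : ∫ x in x₀..1, q.eval x ^ 2 ≤ ∫ x in (0:ℝ)..1, q.eval x ^ 2 := by
    apply intervalIntegral.integral_mono_interval h0 (by linarith) le_rfl
    · filter_upwards with x
      positivity
    · exact (q.continuous_aeval.pow 2).intervalIntegrable _ _
  have h5 : 0 ≤ ∫ x in x₀..1, q.eval x ^ 2 := by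
    apply intervalIntegral.integral_nonneg (by linarith)
    intro x _; positivity
  have hsinv : s⁻¹ ≤ 2 := by
    rw [inv_le_iff_one_le_mul₀ (by linarith)]
    linarith
  calc (q.eval x₀)^2 ≤ ((n:ℝ)+1)^2 * (s⁻¹ * ∫ x in x₀..1, q.eval x ^ 2) := by
        rw [← h3]; exact h2
    _ ≤ ((n:ℝ)+1)^2 * (2 * ∫ x in (0:ℝ)..1, q.eval x ^ 2) := by
        apply mul_le_mul_of_nonneg_left _ (by positivity)
        calc s⁻¹ * ∫ x in x₀..1, q.eval x ^ 2 ≤ 2 * ∫ x in x₀..1, q.eval x ^ 2 :=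
              mul_le_mul_of_nonneg_right hsinv h5
          _ ≤ 2 * ∫ x in (0:ℝ)..1, q.eval x ^ 2 := by linarith
    _ = 2 * ((n:ℝ)+1)^2 * ∫ x in (0:ℝ)..1, q.eval x ^ 2 := by ring

lemma sup_ineq (n : ℕ) (q : Polynomial ℝ) (hq : q.natDegree ≤ n) (x₀ : ℝ)
    (h0 : 0 ≤ x₀) (h1 : x₀ ≤ 1) :
    (q.eval x₀) ^ 2 ≤ 2 * ((n:ℝ)+1)^2 * ∫ x in (0:ℝ)..1, q.eval x ^ 2 := by
  rcases le_or_gt x₀ (1/2) with hc | hc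
  · exact half_ineq n q hq x₀ h0 hc
  · set r : Polynomial ℝ := q.comp (C 1 - X) with hr_def
    have heval : ∀ y : ℝ, r.eval y = q.eval (1 - y) := by
      intro y; simp [hr_def, Polynomial.eval_comp]
    have hdeg : r.natDegree ≤ n := by
      refine le_trans Polynomial.natDegree_comp_le ?_
      have hl : (C 1 - X : Polynomial ℝ).natDegree ≤ 1 := by
        refine le_trans (Polynomial.natDegree_sub_le _ _) ?_
        simp
      calc q.natDegree * (C 1 - X : Polynomial ℝ).natDegree ≤ q.natDegree * 1 :=
            Nat.mul_le_mul_left _ hl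
        _ ≤ n := by omega
    have h2 := half_ineq n r hdeg (1 - x₀) (by linarith) (by linarith)
    rw [heval] at h2
    have h3 : ∫ x in (0:ℝ)..1, r.eval x ^ 2 = ∫ x in (0:ℝ)..1, q.eval x ^ 2 := by
      have : (fun x : ℝ => r.eval x ^ 2) = fun x : ℝ => (fun z => q.eval z ^ 2) (1 - x) := by
        funext x; rw [heval]
      rw [this, intervalIntegral.integral_comp_sub_left (fun z => q.eval z ^ 2) 1]
      norm_num
    rw [h3] at h2
    simpa using h2

end SBLAux

section SBLMeas

lemma cs_meas {μ : Measure ℝ} {f g : ℝ → ℝ}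
    (hfm : AEStronglyMeasurable f μ) (hgm : AEStronglyMeasurable g μ)
    (hf2 : Integrable (fun x => f x ^ 2) μ) (hg2 : Integrable (fun x => g x ^ 2) μ) :
    ∫ x, |f x| * |g x| ∂μ
      ≤ Real.sqrt (∫ x, f x ^ 2 ∂μ) * Real.sqrt (∫ x, g x ^ 2 ∂μ) := by
  have habs : AEStronglyMeasurable (fun x => |f x| * |g x|) μ :=
    (continuous_abs.comp_aestronglyMeasurable hfm).mul
      (continuous_abs.comp_aestronglyMeasurable hgm)
  have hprod : Integrable (fun x => |f x| * |g x|) μ := by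
    refine Integrable.mono ((hf2.add hg2).div_const 2) habs ?_
    filter_upwards with x
    have h1 : |f x| * |g x| ≤ (f x ^ 2 + g x ^ 2) / 2 := by
      nlinarith [sq_nonneg (|f x| - |g x|), sq_abs (f x), sq_abs (g x), abs_nonneg (f x),
        abs_nonneg (g x)]
    have h2 : (0:ℝ) ≤ |f x| * |g x| := by positivity
    have h3 : (0:ℝ) ≤ (f x ^ 2 + g x ^ 2) / 2 := by positivity
    have h4 : |f x ^ 2 + g x ^ 2| = f x ^ 2 + g x ^ 2 := abs_of_nonneg (by positivity)
    simpa [Real.norm_eq_abs, abs_of_nonneg h2, h4] using h1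
  set A := ∫ x, f x ^ 2 ∂μ with hA
  set B := ∫ x, |f x| * |g x| ∂μ with hB
  set D := ∫ x, g x ^ 2 ∂μ with hD
  have hA0 : 0 ≤ A := integral_nonneg fun x => by positivity
  have hD0 : 0 ≤ D := integral_nonneg fun x => by positivity
  have hB0 : 0 ≤ B := integral_nonneg fun x => by positivity
  have key : ∀ t : ℝ, 0 ≤ D * (t * t) + (2 * B) * t + A := by
    intro t
    have h0 : 0 ≤ ∫ x, (|f x| + t * |g x|) ^ 2 ∂μ :=
      integral_nonneg fun x => by positivity
    have h1 : ∫ x, (|f x| + t * |g x|) ^ 2 ∂μ = D * (t * t) + (2 * B) * t + A := by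
      have hfn : (fun x => (|f x| + t * |g x|) ^ 2)
          = fun x => (g x ^ 2 * (t * t) + (|f x| * |g x|) * (2 * t)) + f x ^ 2 := by
        funext x
        have : |f x| ^ 2 = f x ^ 2 := sq_abs _
        have : |g x| ^ 2 = g x ^ 2 := sq_abs _
        nlinarith [sq_abs (f x), sq_abs (g x)]
      have ha : Integrable (fun x => g x ^ 2 * (t * t) + |f x| * |g x| * (2 * t)) μ :=
        (hg2.mul_const _).add (hprod.mul_const _)
      have hb : Integrable (fun x => g x ^ 2 * (t * t)) μ := hg2.mul_const _
      have hc : Integrable (fun x => |f x| * |g x| * (2 * t)) μ := hprod.mul_const _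
      rw [hfn, integral_add ha hf2, integral_add hb hc, integral_mul_const,
        integral_mul_const]
      ring
    linarith [h1 ▸ h0]
  have hd := discrim_le_zero key
  unfold discrim at hd
  have hBsq : B ^ 2 ≤ A * D := by nlinarith
  calc B = Real.sqrt (B ^ 2) := by rw [Real.sqrt_sq hB0]
    _ ≤ Real.sqrt (A * D) := Real.sqrt_le_sqrt hBsq
    _ = Real.sqrt A * Real.sqrt D := Real.sqrt_mul hA0 _

end SBLMeas

set_option maxHeartbeats 1000000 in
/-- strengthened Cauchy-Schwarz inequality between `S₁` and `S_ε`. -/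
theorem statement7 (blo bhi : ℝ) (hblo : 0 < blo) (hb : blo ≤ bhi) :
    ∃ C : ℝ, 0 < C ∧
      ∀ b : ℝ → ℝ, Measurable b → (∀ x ∈ Icc (0:ℝ) 1, blo ≤ b x ∧ b x ≤ bhi) →
      ∀ (lam ε : ℝ) (p : ℕ), 0 < lam → 0 < p → ε ∈ Ioc (0:ℝ) 1 →
        lam * p * ε < 1 / 4 →
      ∀ u v : ℝ → ℝ, PolyOn p u (Icc 0 1) → MemSeps lam ε p v →
        |∫ x in Ioo (0:ℝ) 1, b x * u x * v x|
          ≤ C * min 1 (Real.sqrt (lam * p * ε) * p)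
              * L2N u (Ioo 0 1) * L2N v (Ieps lam ε p) := by
  have hbhi : 0 < bhi := lt_of_lt_of_le hblo hb
  refine ⟨4 * bhi, by positivity, ?_⟩
  intro b hbmeas hbbd lam ε p hlam hp hε hδ4 u v hu hv
  obtain ⟨q, hqdeg, hqeq⟩ := hu
  obtain ⟨⟨hvcont, -, -⟩, hv0⟩ := hv
  set δ : ℝ := lam * p * ε with hδdef
  have hp0 : (0:ℝ) < p := by exact_mod_cast hp
  have hδ0 : 0 < δ := by
    have := hε.1
    positivity
  set I : Set ℝ := Ieps lam ε p with hIdef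
  have hIdef' : I = Icc 0 δ ∪ Icc (1-δ) 1 := rfl
  have hImeas : MeasurableSet I := measurableSet_Icc.union measurableSet_Icc
  have hIsub : I ⊆ Icc 0 1 := by
    rw [hIdef']
    rintro x (⟨h1, h2⟩ | ⟨h1, h2⟩) <;> constructor <;> linarith
  set s : Set ℝ := Ioo 0 1 ∩ I with hsdef
  have hsmeas : MeasurableSet s := measurableSet_Ioo.inter hImeas
  have hssubIoo : s ⊆ Ioo 0 1 := inter_subset_left
  have hssubI : s ⊆ I := inter_subset_right
  have hssubIcc : s ⊆ Icc 0 1 := fun x hx => hIsub (hssubI hx)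
  -- bounds on q and v
  obtain ⟨Mq, hMq⟩ := isCompact_Icc.exists_bound_of_continuousOn
    (q.continuous_aeval.continuousOn (s := Icc (0:ℝ) 1))
  obtain ⟨Mv, hMv⟩ := isCompact_Icc.exists_bound_of_continuousOn hvcont
  have hMq0 : 0 ≤ Mq := le_trans (norm_nonneg _) (hMq 0 ⟨le_rfl, by norm_num⟩)
  have hMv0 : 0 ≤ Mv := le_trans (norm_nonneg _) (hMv 0 ⟨le_rfl, by norm_num⟩)
  -- measurability
  have hu_icc : AEStronglyMeasurable u (volume.restrict (Icc 0 1)) := by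
    refine (q.continuous_aeval.aestronglyMeasurable).congr ?_
    filter_upwards [ae_restrict_mem measurableSet_Icc] with x hx
    exact (hqeq x hx).symm
  have hv_icc : AEStronglyMeasurable v (volume.restrict (Icc 0 1)) :=
    hvcont.aestronglyMeasurable measurableSet_Icc
  have hmono : ∀ S : Set ℝ, S ⊆ Icc 0 1 →
      volume.restrict S ≤ volume.restrict (Icc 0 1) :=
    fun S hS => Measure.restrict_mono hS le_rfl
  have hu_Ioo : AEStronglyMeasurable u (volume.restrict (Ioo 0 1)) :=
    hu_icc.mono_measure (hmono _ Ioo_subset_Icc_self)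
  have hv_Ioo : AEStronglyMeasurable v (volume.restrict (Ioo 0 1)) :=
    hv_icc.mono_measure (hmono _ Ioo_subset_Icc_self)
  have hu_s : AEStronglyMeasurable u (volume.restrict s) :=
    hu_icc.mono_measure (hmono _ hssubIcc)
  have hv_s : AEStronglyMeasurable v (volume.restrict s) :=
    hv_icc.mono_measure (hmono _ hssubIcc)
  -- integrability of b*u*v on Ioo 0 1
  have hbnd : ∀ x ∈ Icc (0:ℝ) 1, ‖b x * u x * v x‖ ≤ bhi * Mq * Mv := by
    intro x hx
    have h1 : |b x| ≤ bhi := by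
      rcases hbbd x hx with ⟨ha, hb2⟩
      rw [abs_of_pos (lt_of_lt_of_le hblo ha)]
      exact hb2
    have h2 : |u x| ≤ Mq := by
      rw [hqeq x hx]
      exact hMq x hx
    have h3 : |v x| ≤ Mv := hMv x hx
    have : ‖b x * u x * v x‖ = |b x| * |u x| * |v x| := by
      rw [Real.norm_eq_abs, abs_mul, abs_mul]
    rw [this]
    have hbl : |b x| * |u x| ≤ bhi * Mq :=
      mul_le_mul h1 h2 (abs_nonneg _) (le_of_lt hbhi)
    exact mul_le_mul hbl h3 (abs_nonneg _) (by positivity)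
  have h_int_buv : IntegrableOn (fun x => b x * u x * v x) (Ioo 0 1) volume := by
    refine ⟨(hbmeas.aestronglyMeasurable.restrict.mul hu_Ioo).mul hv_Ioo,
      HasFiniteIntegral.restrict_of_bounded (C := bhi * Mq * Mv) (by simp) ?_⟩
    filter_upwards [ae_restrict_mem measurableSet_Ioo] with x hx
    exact hbnd x (Ioo_subset_Icc_self hx)
  -- step A : reduce to s
  have hstepA : ∫ x in Ioo (0:ℝ) 1, b x * u x * v x = ∫ x in s, b x * u x * v x := by
    have hsplit := integral_inter_add_diff (f := fun x => b x * u x * v x)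
      (s := Ioo (0:ℝ) 1) (μ := volume) hImeas h_int_buv
    have hzero : ∫ x in Ioo (0:ℝ) 1 \ I, b x * u x * v x = 0 := by
      rw [setIntegral_congr_fun (measurableSet_Ioo.diff hImeas)
        (g := fun _ => (0:ℝ))]
      · simp
      · intro x hx
        have : v x = 0 := hv0 x ⟨Ioo_subset_Icc_self hx.1, hx.2⟩
        simp [this]
    rw [← hsplit, hzero, add_zero]
  -- integrability of squares
  have h_int_q2_Icc : IntegrableOn (fun x => q.eval x ^ 2) (Icc 0 1) volume :=
    (q.continuous_aeval.pow 2).integrableOn_Icc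
  have h_int_u2_Ioo : IntegrableOn (fun x => u x ^ 2) (Ioo 0 1) volume := by
    refine (h_int_q2_Icc.mono_set Ioo_subset_Icc_self).congr ?_
    filter_upwards [ae_restrict_mem measurableSet_Ioo] with x hx
    rw [hqeq x (Ioo_subset_Icc_self hx)]
  have h_int_u2_s : IntegrableOn (fun x => u x ^ 2) s volume :=
    h_int_u2_Ioo.mono_set hssubIoo
  have hIcomp : IsCompact I := (isCompact_Icc).union isCompact_Icc
  have h_int_v2_I : IntegrableOn (fun x => v x ^ 2) I volume :=
    ((hvcont.mono hIsub).pow 2).integrableOn_compact hIcomp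
  have h_int_v2_s : IntegrableOn (fun x => v x ^ 2) s volume :=
    h_int_v2_I.mono_set hssubI
  -- step B : bound by bhi * ∫ |u||v|
  have h_int_absuv : IntegrableOn (fun x => |u x| * |v x|) s volume := by
    refine ⟨(continuous_abs.comp_aestronglyMeasurable hu_s).mul
        (continuous_abs.comp_aestronglyMeasurable hv_s),
      HasFiniteIntegral.restrict_of_bounded (C := Mq * Mv)
        (lt_of_le_of_lt (measure_mono hssubIcc) (by simp)) ?_⟩
    filter_upwards [ae_restrict_mem hsmeas] with x hx
    · have h2 : |u x| ≤ Mq := by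
        rw [hqeq x (hssubIcc hx)]; exact hMq x (hssubIcc hx)
      have h3 : |v x| ≤ Mv := hMv x (hssubIcc hx)
      have : ‖|u x| * |v x|‖ = |u x| * |v x| := by
        rw [Real.norm_eq_abs, abs_of_nonneg (by positivity)]
      rw [this]
      exact mul_le_mul h2 h3 (abs_nonneg _) hMq0
  have hstepB : |∫ x in s, b x * u x * v x| ≤ bhi * ∫ x in s, |u x| * |v x| := by
    have habs_int : IntegrableOn (fun x => |b x| * (|u x| * |v x|)) s volume := by
      have h := (h_int_buv.mono_set hssubIoo).abs
      have heq : (fun x => |b x * u x * v x|) = fun x => |b x| * (|u x| * |v x|) := by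
        funext x; rw [abs_mul, abs_mul, mul_assoc]
      rwa [heq] at h
    calc |∫ x in s, b x * u x * v x| ≤ ∫ x in s, |b x| * (|u x| * |v x|) := by
          have h := norm_integral_le_integral_norm (μ := volume.restrict s)
            (f := fun x => b x * u x * v x)
          simp only [Real.norm_eq_abs, abs_mul] at h
          calc |∫ x in s, b x * u x * v x| ≤ ∫ x in s, |b x| * |u x| * |v x| := h
            _ = ∫ x in s, |b x| * (|u x| * |v x|) := by
              congr 1; funext x; ring
      _ ≤ ∫ x in s, bhi * (|u x| * |v x|) := by
          refine setIntegral_mono_on habs_int (h_int_absuv.const_mul bhi) hsmeas ?_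
          intro x hx
          have h1 : |b x| ≤ bhi := by
            rcases hbbd x (hssubIcc hx) with ⟨ha, hb2⟩
            rw [abs_of_pos (lt_of_lt_of_le hblo ha)]
            exact hb2
          exact mul_le_mul_of_nonneg_right h1 (by positivity)
      _ = bhi * ∫ x in s, |u x| * |v x| := integral_const_mul bhi _
  -- step C : Cauchy-Schwarz
  have hstepC : ∫ x in s, |u x| * |v x|
      ≤ Real.sqrt (∫ x in s, u x ^ 2) * Real.sqrt (∫ x in s, v x ^ 2) :=
    cs_meas hu_s hv_s h_int_u2_s h_int_v2_s
  -- step D/E : square-integral bounds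
  set Ju : ℝ := ∫ x in Ioo (0:ℝ) 1, u x ^ 2 with hJu
  set Jv : ℝ := ∫ x in I, v x ^ 2 with hJv
  have hJu0 : 0 ≤ Ju := setIntegral_nonneg measurableSet_Ioo fun x _ => sq_nonneg _
  have hJv0 : 0 ≤ Jv := setIntegral_nonneg hImeas fun x _ => sq_nonneg _
  have hus_le_Ju : (∫ x in s, u x ^ 2) ≤ Ju :=
    setIntegral_mono_set h_int_u2_Ioo (Filter.Eventually.of_forall fun x => sq_nonneg _)
      (HasSubset.Subset.eventuallyLE hssubIoo)
  have hvs_le_Jv : (∫ x in s, v x ^ 2) ≤ Jv :=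
    setIntegral_mono_set h_int_v2_I (Filter.Eventually.of_forall fun x => sq_nonneg _)
      (HasSubset.Subset.eventuallyLE hssubI)
  have hJq : ∫ x in (0:ℝ)..1, q.eval x ^ 2 = Ju := by
    rw [hJu, intervalIntegral.integral_of_le (by norm_num : (0:ℝ) ≤ 1),
      integral_Ioc_eq_integral_Ioo]
    exact setIntegral_congr_fun measurableSet_Ioo fun x hx => by
      rw [hqeq x (Ioo_subset_Icc_self hx)]
  set M : ℝ := 2 * ((p:ℝ)+1)^2 * Ju with hM
  have hM0 : 0 ≤ M := by positivity
  have hsup : ∀ x ∈ Icc (0:ℝ) 1, q.eval x ^ 2 ≤ M := by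
    intro x hx
    have h := sup_ineq p q hqdeg x hx.1 hx.2
    rwa [hJq] at h
  have hp1 : (1:ℝ) ≤ (p:ℝ) := by exact_mod_cast hp
  have hpiece : ∀ a c : ℝ, Icc a c ⊆ Icc 0 1 → c - a = δ →
      (∫ x in Icc a c, q.eval x ^ 2) ≤ δ * M := by
    intro a c hsub hlen
    have hint : IntegrableOn (fun x => q.eval x ^ 2) (Icc a c) volume :=
      h_int_q2_Icc.mono_set hsub
    calc (∫ x in Icc a c, q.eval x ^ 2) ≤ ∫ _ in Icc a c, M := by
          refine setIntegral_mono_on hint (integrableOn_const (by simp))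
            measurableSet_Icc fun x hx => hsup x (hsub hx)
      _ = (volume (Icc a c)).toReal * M := by rw [setIntegral_const]; rfl
      _ = δ * M := by
          rw [Real.volume_Icc, ENNReal.toReal_ofReal (by linarith), hlen]
  have hIbound : (∫ x in I, q.eval x ^ 2) ≤ 16 * δ * (p:ℝ)^2 * Ju := by
    have hdisj : Disjoint (Icc (0:ℝ) δ) (Icc (1-δ) 1) := by
      rw [Set.disjoint_left]
      intro x hx1 hx2
      have := hx1.2
      have := hx2.1
      linarith
    have hsub1 : Icc (0:ℝ) δ ⊆ Icc 0 1 := Icc_subset_Icc le_rfl (by linarith)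
    have hsub2 : Icc (1-δ) 1 ⊆ Icc (0:ℝ) 1 := Icc_subset_Icc (by linarith) le_rfl
    have hsplit : (∫ x in I, q.eval x ^ 2)
        = (∫ x in Icc 0 δ, q.eval x ^ 2) + ∫ x in Icc (1-δ) 1, q.eval x ^ 2 := by
      rw [hIdef']
      exact setIntegral_union hdisj measurableSet_Icc (h_int_q2_Icc.mono_set hsub1)
        (h_int_q2_Icc.mono_set hsub2)
    have h1 := hpiece 0 δ hsub1 (by ring)
    have h2 := hpiece (1-δ) 1 hsub2 (by ring)
    have hpsq : ((p:ℝ)+1)^2 ≤ 4 * (p:ℝ)^2 := by nlinarith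
    calc (∫ x in I, q.eval x ^ 2) ≤ δ * M + δ * M := by rw [hsplit]; exact add_le_add h1 h2
      _ = 4 * δ * ((p:ℝ)+1)^2 * Ju := by rw [hM]; ring
      _ ≤ 16 * δ * (p:ℝ)^2 * Ju := by
          have hh : 0 ≤ δ * Ju * (4*(p:ℝ)^2 - ((p:ℝ)+1)^2) :=
            mul_nonneg (mul_nonneg hδ0.le hJu0) (by linarith)
          nlinarith [hh]
  have hus_le2 : (∫ x in s, u x ^ 2) ≤ 16 * δ * (p:ℝ)^2 * Ju := by
    have he : (∫ x in s, u x ^ 2) = ∫ x in s, q.eval x ^ 2 :=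
      setIntegral_congr_fun hsmeas fun x hx => by rw [hqeq x (hssubIcc hx)]
    rw [he]
    calc (∫ x in s, q.eval x ^ 2) ≤ ∫ x in I, q.eval x ^ 2 :=
          setIntegral_mono_set (h_int_q2_Icc.mono_set hIsub)
            (Filter.Eventually.of_forall fun x => sq_nonneg _)
            (HasSubset.Subset.eventuallyLE hssubI)
      _ ≤ 16 * δ * (p:ℝ)^2 * Ju := hIbound
  -- final assembly
  set Su : ℝ := Real.sqrt (∫ x in s, u x ^ 2) with hSu
  set Sv : ℝ := Real.sqrt (∫ x in s, v x ^ 2) with hSv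
  have hSu0 : 0 ≤ Su := Real.sqrt_nonneg _
  have hSv0 : 0 ≤ Sv := Real.sqrt_nonneg _
  have hcore : |∫ x in Ioo (0:ℝ) 1, b x * u x * v x| ≤ bhi * (Su * Sv) := by
    rw [hstepA]
    calc |∫ x in s, b x * u x * v x| ≤ bhi * ∫ x in s, |u x| * |v x| := hstepB
      _ ≤ bhi * (Su * Sv) := mul_le_mul_of_nonneg_left hstepC hbhi.le
  have hNu : L2N u (Ioo 0 1) = Real.sqrt Ju := rfl
  have hNv : L2N v (Ieps lam ε p) = Real.sqrt Jv := rfl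
  have hSuNu : Su ≤ Real.sqrt Ju := Real.sqrt_le_sqrt hus_le_Ju
  have hSvNv : Sv ≤ Real.sqrt Jv := Real.sqrt_le_sqrt hvs_le_Jv
  have hSu2 : Su ≤ 4 * Real.sqrt δ * (p:ℝ) * Real.sqrt Ju := by
    calc Su ≤ Real.sqrt (16 * δ * (p:ℝ)^2 * Ju) := Real.sqrt_le_sqrt hus_le2
      _ = 4 * Real.sqrt δ * (p:ℝ) * Real.sqrt Ju := by
        rw [show 16 * δ * (p:ℝ)^2 * Ju = (4 * Real.sqrt δ * (p:ℝ))^2 * Ju by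
          rw [mul_pow, mul_pow, Real.sq_sqrt hδ0.le]; ring]
        rw [Real.sqrt_mul (sq_nonneg _), Real.sqrt_sq (by positivity)]
  rw [hNu, hNv]
  rcases le_total (Real.sqrt δ * (p:ℝ)) 1 with hm | hm
  · rw [min_eq_right hm]
    calc |∫ x in Ioo (0:ℝ) 1, b x * u x * v x| ≤ bhi * (Su * Sv) := hcore
      _ ≤ bhi * ((4 * Real.sqrt δ * (p:ℝ) * Real.sqrt Ju) * Real.sqrt Jv) := by
          refine mul_le_mul_of_nonneg_left ?_ hbhi.le
          exact mul_le_mul hSu2 hSvNv hSv0 (by positivity)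
      _ = 4 * bhi * (Real.sqrt δ * (p:ℝ)) * Real.sqrt Ju * Real.sqrt Jv := by ring
  · rw [min_eq_left hm]
    have hJru : 0 ≤ Real.sqrt Ju := Real.sqrt_nonneg _
    have hJrv : 0 ≤ Real.sqrt Jv := Real.sqrt_nonneg _
    calc |∫ x in Ioo (0:ℝ) 1, b x * u x * v x| ≤ bhi * (Su * Sv) := hcore
      _ ≤ bhi * (Real.sqrt Ju * Real.sqrt Jv) := by
          refine mul_le_mul_of_nonneg_left ?_ hbhi.le
          exact mul_le_mul hSuNu hSvNv hSv0 hJru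
      _ ≤ 4 * bhi * 1 * Real.sqrt Ju * Real.sqrt Jv := by
          have hh : 0 ≤ bhi * Real.sqrt Ju * Real.sqrt Jv :=
            mul_nonneg (mul_nonneg hbhi.le hJru) hJrv
          linarith
end

section
/- For all λ > 0, p ∈ ℕ and ε ∈ (0,1] with λpε < 1/4, the space S(λ,p) is the direct sum S₁ ⊕ S_ε: every z ∈ S(λ,p) admits a unique decomposition z = z₁ + z_ε with z₁ ∈ S₁ and z_ε ∈ S_ε. -/
open MeasureTheory Set

/-- `S(λ,p) = S₁ ⊕ S_ε` when `λpε < 1/4`. -/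
theorem statement9 (lam ε : ℝ) (p : ℕ) (hlam : 0 < lam) (hp : 0 < p)
    (hε : ε ∈ Ioc (0:ℝ) 1) (hmesh : lam * p * ε < 1 / 4) :
    ∀ z : ℝ → ℝ, MemS lam ε p z →
      ∃ z₁ zε : ℝ → ℝ,
        PolyOn p z₁ (Icc 0 1) ∧ MemSeps lam ε p zε ∧
        (∀ x ∈ Icc (0:ℝ) 1, z x = z₁ x + zε x) ∧
        ∀ w₁ wε : ℝ → ℝ,
          PolyOn p w₁ (Icc 0 1) → MemSeps lam ε p wε →
          (∀ x ∈ Icc (0:ℝ) 1, z x = w₁ x + wε x) →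
          (∀ x ∈ Icc (0:ℝ) 1, z₁ x = w₁ x) ∧ (∀ x ∈ Icc (0:ℝ) 1, zε x = wε x) := by
  intro z hz
  set a := lam * p * ε with ha
  have hppos : (0:ℝ) < p := by exact_mod_cast hp
  have hapos : 0 < a := by
    have := hε.1
    positivity
  have halt : a < 1 - a := by
    simp only [ha] at hmesh ⊢
    linarith
  obtain ⟨hc, hmid, -⟩ := hz
  obtain ⟨⟨q₀, hq₀d, hq₀⟩, ⟨q, hqd, hq⟩, ⟨q₂, hq₂d, hq₂⟩⟩ := hmid hmesh
  refine ⟨fun x => q.eval x, fun x => z x - q.eval x, ⟨q, hqd, fun x _ => rfl⟩, ?_, ?_, ?_⟩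
  · constructor
    · refine ⟨hc.sub (q.continuous.continuousOn), fun _ => ⟨?_, ?_, ?_⟩, fun h => absurd hmesh (not_lt.2 h)⟩
      · exact ⟨q₀ - q, (Polynomial.natDegree_sub_le _ _).trans (max_le hq₀d hqd),
          fun x hx => by show z x - _ = _; rw [Polynomial.eval_sub, hq₀ x hx]⟩
      · exact ⟨0, by simp, fun x hx => by show z x - _ = _; rw [hq x hx]; simp⟩
      · exact ⟨q₂ - q, (Polynomial.natDegree_sub_le _ _).trans (max_le hq₂d hqd),
          fun x hx => by show z x - _ = _; rw [Polynomial.eval_sub, hq₂ x hx]⟩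
    · intro x hx
      obtain ⟨⟨hx0, hx1⟩, hxI⟩ := hx
      rw [Ieps, mem_union, not_or, mem_Icc, mem_Icc, not_and, not_and] at hxI
      have h1 : a < x := by
        by_contra h
        exact absurd (hxI.1 hx0) (not_not.2 (le_of_not_gt h))
      have h2 : x < 1 - a := by
        by_contra h
        exact absurd (hxI.2 (le_of_not_gt h)) (not_not.2 hx1)
      show z x - _ = _
      rw [hq x ⟨h1.le, h2.le⟩]; ring
  · intro x _; ring
  · intro w₁ wε ⟨r, hrd, hr⟩ hwε hw
    have hmem : ∀ x ∈ Ioo a (1 - a), x ∈ Icc (0:ℝ) 1 ∧ x ∉ Ieps lam ε p := by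
      intro x ⟨h1, h2⟩
      refine ⟨⟨(hapos.trans h1).le, h2.le.trans (by linarith)⟩, ?_⟩
      rw [Ieps, mem_union, not_or, mem_Icc, mem_Icc]
      push_neg
      exact ⟨fun _ => h1, fun h => absurd h (not_le.2 h2)⟩
    have hqr : q = r := by
      apply Polynomial.eq_of_infinite_eval_eq
      apply Set.Infinite.mono (s := Ioo a (1 - a))
      · intro x hx
        obtain ⟨hx1, hx2⟩ := hmem x hx
        have h0 : wε x = 0 := hwε.2 x ⟨hx1, hx2⟩
        have := hw x hx1
        rw [h0, add_zero] at this
        have hz' : z x = q.eval x := hq x ⟨hx.1.le, hx.2.le⟩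
        have hw' : w₁ x = r.eval x := hr x hx1
        simp only [mem_setOf_eq]
        rw [← hz', this, hw']
      · exact Set.Ioo_infinite halt
    constructor
    · intro x hx
      show Polynomial.eval x q = _
      rw [hqr, ← hr x hx]
    · intro x hx
      have := hw x hx
      show z x - _ = _
      rw [this, hqr, ← hr x hx]
      ring
end

section
/- For every λ > 0, p ∈ ℕ and ε ∈ (0,1], the Galerkin approximation u_FEM and the projection P₀ u of the solution u satisfy the chain of inequalities ε ‖(u_FEM − P₀ u)′‖_{L²(0,1)} ≤ ‖u_FEM − P₀ u‖_E ≤ ε ‖(u − P₀ u)′‖_{L²(0,1)}, where derivatives of piecewise polynomials are taken piecewise. -/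
open MeasureTheory Set

namespace Stmt12

/-- measurable and bounded on `Icc 0 1`. -/
def Nice (g : ℝ → ℝ) : Prop :=
  Measurable g ∧ ∃ M : ℝ, ∀ x ∈ Icc (0:ℝ) 1, |g x| ≤ M

lemma Nice.of_continuous {g : ℝ → ℝ} (hg : Continuous g) : Nice g := by
  refine ⟨hg.measurable, ?_⟩
  obtain ⟨M, hM⟩ := (isCompact_Icc (a := (0:ℝ)) (b := 1)).exists_bound_of_continuousOn
    (hg.norm.continuousOn)
  exact ⟨M, fun x hx => by simpa using hM x hx⟩

lemma Nice.mul {g h : ℝ → ℝ} (hg : Nice g) (hh : Nice h) : Nice (fun x => g x * h x) := by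
  obtain ⟨mg, Mg, hMg⟩ := hg
  obtain ⟨mh, Mh, hMh⟩ := hh
  refine ⟨mg.mul mh, Mg * Mh, fun x hx => ?_⟩
  rw [abs_mul]
  exact mul_le_mul (hMg x hx) (hMh x hx) (abs_nonneg _) ((abs_nonneg _).trans (hMg x hx))

lemma Nice.sub {g h : ℝ → ℝ} (hg : Nice g) (hh : Nice h) : Nice (fun x => g x - h x) := by
  obtain ⟨mg, Mg, hMg⟩ := hg
  obtain ⟨mh, Mh, hMh⟩ := hh
  refine ⟨mg.sub mh, Mg + Mh, fun x hx => ?_⟩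
  exact (abs_sub (g x) (h x)).trans (add_le_add (hMg x hx) (hMh x hx))

lemma Nice.integrableOn {g : ℝ → ℝ} (hg : Nice g) : IntegrableOn g (Icc 0 1) := by
  obtain ⟨mg, M, hM⟩ := hg
  haveI : IsFiniteMeasure (volume.restrict (Icc (0:ℝ) 1)) := by
    constructor
    rw [Measure.restrict_apply_univ]
    simp [Real.volume_Icc]
  refine ⟨mg.aestronglyMeasurable, ?_⟩
  apply MeasureTheory.HasFiniteIntegral.of_bounded (C := M)
  filter_upwards [ae_restrict_mem measurableSet_Icc] with x hx
  simpa using hM x hx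

lemma Nice.integrableOnIoo {g : ℝ → ℝ} (hg : Nice g) : IntegrableOn g (Ioo 0 1) :=
  hg.integrableOn.mono_set Ioo_subset_Icc_self

lemma cauchy_schwarz {μ : Measure ℝ} {F G : ℝ → ℝ}
    (hFF : Integrable (fun x => F x * F x) μ) (hGG : Integrable (fun x => G x * G x) μ)
    (hFG : Integrable (fun x => F x * G x) μ) :
    (∫ x, F x * G x ∂μ) ≤ Real.sqrt (∫ x, F x * F x ∂μ) * Real.sqrt (∫ x, G x * G x ∂μ) := by
  set S := ∫ x, F x * F x ∂μ with hS
  set A := ∫ x, G x * G x ∂μ with hA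
  set T := ∫ x, F x * G x ∂μ with hT
  have hSnn : 0 ≤ S := integral_nonneg (fun x => mul_self_nonneg _)
  have hAnn : 0 ≤ A := integral_nonneg (fun x => mul_self_nonneg _)
  have key : ∀ s t : ℝ, 0 ≤ s ^ 2 * S - 2 * s * t * T + t ^ 2 * A := by
    intro s t
    have h1 : (0:ℝ) ≤ ∫ x, (s * F x - t * G x) ^ 2 ∂μ :=
      integral_nonneg (fun x => sq_nonneg _)
    have h2 : (fun x => (s * F x - t * G x) ^ 2)
        = fun x => (s ^ 2 * (F x * F x) - 2 * s * t * (F x * G x)) + t ^ 2 * (G x * G x) := by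
      funext x; ring
    have i1 : Integrable (fun x => s ^ 2 * (F x * F x)) μ := hFF.const_mul _
    have i2 : Integrable (fun x => 2 * s * t * (F x * G x)) μ := hFG.const_mul _
    have i3 : Integrable (fun x => t ^ 2 * (G x * G x)) μ := hGG.const_mul _
    have ha : ∫ x, (s ^ 2 * (F x * F x) - 2 * s * t * (F x * G x)) + t ^ 2 * (G x * G x) ∂μ
        = (∫ x, s ^ 2 * (F x * F x) - 2 * s * t * (F x * G x) ∂μ)
          + ∫ x, t ^ 2 * (G x * G x) ∂μ := integral_add (i1.sub i2) i3
    have hb : ∫ x, s ^ 2 * (F x * F x) - 2 * s * t * (F x * G x) ∂μ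
        = (∫ x, s ^ 2 * (F x * F x) ∂μ) - ∫ x, 2 * s * t * (F x * G x) ∂μ :=
      integral_sub i1 i2
    have hc : ∫ x, s ^ 2 * (F x * F x) ∂μ = s ^ 2 * S := integral_const_mul _ _
    have hd : ∫ x, 2 * s * t * (F x * G x) ∂μ = 2 * s * t * T := integral_const_mul _ _
    have he : ∫ x, t ^ 2 * (G x * G x) ∂μ = t ^ 2 * A := integral_const_mul _ _
    rw [h2] at h1
    rw [ha, hb, hc, hd, he] at h1
    linarith
  rcases le_or_gt T 0 with hT0 | hT0
  · exact hT0.trans (mul_nonneg (Real.sqrt_nonneg _) (Real.sqrt_nonneg _))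
  · have hApos : 0 < A := by
      rcases hAnn.lt_or_eq with h | h
      · exact h
      · exfalso
        have hk := key 1 ((S + 1) / (2 * T))
        rw [← h] at hk
        have h2T : (0:ℝ) ≠ 2 * T := by positivity
        have he : 2 * 1 * ((S + 1) / (2 * T)) * T = S + 1 := by
          field_simp
        nlinarith
    have hSpos : 0 < S := by
      rcases hSnn.lt_or_eq with h | h
      · exact h
      · exfalso
        have hk := key ((A + 1) / (2 * T)) 1
        rw [← h] at hk
        have h2T : (0:ℝ) ≠ 2 * T := by positivity
        have he : 2 * ((A + 1) / (2 * T)) * 1 * T = A + 1 := by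
          field_simp
        nlinarith
    have h1 := key (Real.sqrt A) (Real.sqrt S)
    have e1 : Real.sqrt A ^ 2 = A := Real.sq_sqrt hAnn
    have e2 : Real.sqrt S ^ 2 = S := Real.sq_sqrt hSnn
    have p1 : 0 < Real.sqrt A := Real.sqrt_pos.2 hApos
    have p2 : 0 < Real.sqrt S := Real.sqrt_pos.2 hSpos
    nlinarith [mul_pos p1 p2]

lemma memS0_sub {lam ε : ℝ} {p : ℕ} {v w : ℝ → ℝ}
    (hv : MemS0 lam ε p v) (hw : MemS0 lam ε p w) :
    MemS0 lam ε p (fun x => v x - w x) := by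
  obtain ⟨⟨hvc, hv1, hv2⟩, hv0, hv1'⟩ := hv
  obtain ⟨⟨hwc, hw1, hw2⟩, hw0, hw1'⟩ := hw
  have poly : ∀ s : Set ℝ, PolyOn p v s → PolyOn p w s →
      PolyOn p (fun x => v x - w x) s := by
    rintro s ⟨q1, hq1, he1⟩ ⟨q2, hq2, he2⟩
    refine ⟨q1 - q2, ?_, fun x hx => by simp [he1 x hx, he2 x hx]⟩
    exact (Polynomial.natDegree_sub_le _ _).trans (max_le hq1 hq2)
  refine ⟨⟨hvc.sub hwc, fun h => ?_, fun h => poly _ (hv2 h) (hw2 h)⟩, by simp [hv0, hw0],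
    by simp [hv1', hw1']⟩
  obtain ⟨a1, a2, a3⟩ := hv1 h
  obtain ⟨b1, b2, b3⟩ := hw1 h
  exact ⟨poly _ a1 b1, poly _ a2 b2, poly _ a3 b3⟩

lemma ibp_piece {u : ℝ → ℝ} (hu : ContDiff ℝ (⊤ : ℕ∞) u) (q : Polynomial ℝ) (α β : ℝ) :
    ∫ x in α..β, iteratedDeriv 2 u x * q.eval x
      = deriv u β * q.eval β - deriv u α * q.eval α
        - ∫ x in α..β, deriv u x * (Polynomial.eval x q.derivative) := by
  have hu2 : ContDiff ℝ ((⊤ : ℕ∞) : WithTop ℕ∞) u := hu.of_le (by simp)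
  have hcd : Continuous (deriv u) := hu.continuous_deriv (by simp)
  have hcd2 : Continuous (iteratedDeriv 2 u) := by
    rw [iteratedDeriv_eq_iterate]
    exact (hu2.iterate_deriv 2).continuous
  have hd1 : ∀ x ∈ uIcc α β, HasDerivAt (deriv u) (iteratedDeriv 2 u x) x := by
    intro x _
    have hdd : DifferentiableAt ℝ (deriv u) x := by
      have h1 : ContDiff ℝ ((⊤ : ℕ∞) : WithTop ℕ∞) (deriv u) := by
        have := hu2.iterate_deriv 1
        simpa using this
      exact (h1.differentiable (by simp)) x
    have : iteratedDeriv 2 u x = deriv (deriv u) x := by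
      rw [iteratedDeriv_succ, iteratedDeriv_one]
    rw [this]
    exact hdd.hasDerivAt
  have hd2 : ∀ x ∈ uIcc α β, HasDerivAt (fun y => q.eval y)
      (Polynomial.eval x q.derivative) x := fun x _ => q.hasDerivAt x
  have := intervalIntegral.integral_deriv_mul_eq_sub hd1 hd2
    (hcd2.intervalIntegrable α β)
    ((Polynomial.continuous q.derivative).intervalIntegrable α β)
  have hsplit := intervalIntegral.integral_add (μ := volume)
    ((hcd2.mul (Polynomial.continuous q)).intervalIntegrable α β)
    ((hcd.mul (Polynomial.continuous q.derivative)).intervalIntegrable α β)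
  simp only [Pi.mul_apply] at hsplit
  linarith [this, hsplit]

lemma Nice.ite {c : ℝ → Prop} [DecidablePred c] (hc : MeasurableSet {x | c x})
    {g h : ℝ → ℝ} (hg : Nice g) (hh : Nice h) :
    Nice (fun x => if c x then g x else h x) := by
  obtain ⟨mg, Mg, hMg⟩ := hg
  obtain ⟨mh, Mh, hMh⟩ := hh
  refine ⟨Measurable.ite hc mg mh, max Mg Mh, fun x hx => ?_⟩
  by_cases hcx : c x
  · simpa [hcx] using (hMg x hx).trans (le_max_left _ _)
  · simpa [hcx] using (hMh x hx).trans (le_max_right _ _)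

lemma Nice.poly (q : Polynomial ℝ) : Nice (fun x => q.eval x) :=
  Nice.of_continuous q.continuous

lemma rep {lam ε : ℝ} {p : ℕ} (hlam : 0 < lam) (hp : 0 < p) (hε : 0 < ε)
    {w : ℝ → ℝ} (hw : MemS lam ε p w) :
    ∃ W D : ℝ → ℝ, Nice W ∧ Nice D ∧
      (∀ x ∈ Icc (0:ℝ) 1, w x = W x) ∧
      (∀ᵐ x ∂(volume.restrict (Ioo (0:ℝ) 1)),
        HasDerivAt w (D x) x ∧ deriv w x = D x) := by
  set a := lam * (p : ℝ) * ε with ha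
  have ha0 : 0 < a := mul_pos (mul_pos hlam (by exact_mod_cast hp)) hε
  by_cases hA : a < 1 / 4
  · obtain ⟨⟨q1, hd1, he1⟩, ⟨q2, hd2, he2⟩, ⟨q3, hd3, he3⟩⟩ := hw.2.1 hA
    have ha1 : a < 1 - a := by linarith
    refine ⟨fun x => if x < a then q1.eval x else if x ≤ 1 - a then q2.eval x else q3.eval x,
      fun x => if x < a then q1.derivative.eval x else if x ≤ 1 - a then q2.derivative.eval x
        else q3.derivative.eval x,
      Nice.ite measurableSet_Iio (Nice.poly _) (Nice.ite measurableSet_Iic (Nice.poly _)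
        (Nice.poly _)),
      Nice.ite measurableSet_Iio (Nice.poly _) (Nice.ite measurableSet_Iic (Nice.poly _)
        (Nice.poly _)), ?_, ?_⟩
    · intro x hx
      by_cases h1 : x < a
      · simp only [if_pos h1]
        exact he1 x ⟨hx.1, h1.le⟩
      · by_cases h2 : x ≤ 1 - a
        · simp only [if_neg h1, if_pos h2]
          exact he2 x ⟨not_lt.1 h1, h2⟩
        · simp only [if_neg h1, if_neg h2]
          exact he3 x ⟨(not_le.1 h2).le, hx.2⟩
    · have hz : (volume.restrict (Ioo (0:ℝ) 1)) ({a, 1 - a} : Set ℝ) = 0 :=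
        Set.Countable.measure_zero (by simp) _
      filter_upwards [ae_restrict_mem measurableSet_Ioo, compl_mem_ae_iff.2 hz] with x hx hx2
      have hxa : x ≠ a ∧ x ≠ 1 - a := by simpa using hx2
      rcases lt_or_gt_of_ne hxa.1 with h | h
      · have hev : w =ᶠ[nhds x] fun y => q1.eval y := by
          filter_upwards [isOpen_Ioo.mem_nhds (⟨hx.1, h⟩ : x ∈ Ioo 0 a)] with y hy using
            he1 y ⟨hy.1.le, hy.2.le⟩
        have hder := (q1.hasDerivAt x).congr_of_eventuallyEq hev
        constructor
        · simp only [if_pos h]; exact hder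
        · simp only [if_pos h]; exact hder.deriv
      · rcases lt_or_gt_of_ne hxa.2 with h2 | h2
        · have hev : w =ᶠ[nhds x] fun y => q2.eval y := by
            filter_upwards [isOpen_Ioo.mem_nhds (⟨h, h2⟩ : x ∈ Ioo a (1 - a))] with y hy using
              he2 y ⟨hy.1.le, hy.2.le⟩
          have hder := (q2.hasDerivAt x).congr_of_eventuallyEq hev
          constructor
          · simp only [if_neg (not_lt.2 h.le), if_pos h2.le]; exact hder
          · simp only [if_neg (not_lt.2 h.le), if_pos h2.le]; exact hder.deriv
        · have hev : w =ᶠ[nhds x] fun y => q3.eval y := by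
            filter_upwards [isOpen_Ioo.mem_nhds (⟨h2, hx.2⟩ : x ∈ Ioo (1 - a) 1)] with y hy using
              he3 y ⟨hy.1.le, hy.2.le⟩
          have hder := (q3.hasDerivAt x).congr_of_eventuallyEq hev
          have hn1 : ¬ x < a := not_lt.2 (by linarith)
          have hn2 : ¬ x ≤ 1 - a := not_le.2 h2
          constructor
          · simp only [if_neg hn1, if_neg hn2]; exact hder
          · simp only [if_neg hn1, if_neg hn2]; exact hder.deriv
  · obtain ⟨q, hqd, hqe⟩ := hw.2.2 (le_of_not_gt hA)
    refine ⟨fun x => q.eval x, fun x => q.derivative.eval x, Nice.poly _, Nice.poly _,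
      fun x hx => hqe x hx, ?_⟩
    filter_upwards [ae_restrict_mem measurableSet_Ioo] with x hx
    have hev : w =ᶠ[nhds x] fun y => q.eval y := by
      filter_upwards [isOpen_Ioo.mem_nhds hx] with y hy using hqe y (Ioo_subset_Icc_self hy)
    have hder := (q.hasDerivAt x).congr_of_eventuallyEq hev
    exact ⟨hder, hder.deriv⟩

lemma ibp {u : ℝ → ℝ} (hu : ContDiff ℝ (⊤ : ℕ∞) u) {lam ε : ℝ} {p : ℕ}
    (hlam : 0 < lam) (hp : 0 < p) (hε : 0 < ε)
    {χ : ℝ → ℝ} (hχ : MemS0 lam ε p χ) :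
    ∫ x in Ioo (0:ℝ) 1, iteratedDeriv 2 u x * χ x
      = - ∫ x in Ioo (0:ℝ) 1, deriv u x * deriv χ x := by
  have hcd : Continuous (deriv u) := hu.continuous_deriv (by simp)
  have hcd2 : Continuous (iteratedDeriv 2 u) := by
    rw [iteratedDeriv_eq_iterate]
    exact ((hu.of_le (by simp) : ContDiff ℝ ((⊤ : ℕ∞) : WithTop ℕ∞) u).iterate_deriv 2).continuous
  set a := lam * (p : ℝ) * ε with ha
  have ha0 : 0 < a := mul_pos (mul_pos hlam (by exact_mod_cast hp)) hε
  have hder : ∀ (q : Polynomial ℝ) (α β : ℝ), (∀ x ∈ Icc α β, χ x = q.eval x) →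
      ∀ x ∈ Ioo α β, deriv χ x = q.derivative.eval x := by
    intro q α β he x hx
    have hev : χ =ᶠ[nhds x] fun y => q.eval y := by
      filter_upwards [isOpen_Ioo.mem_nhds hx] with y hy using he y (Ioo_subset_Icc_self hy)
    exact ((q.hasDerivAt x).congr_of_eventuallyEq hev).deriv
  have int1 : ∀ (q : Polynomial ℝ) (α β : ℝ), (∀ x ∈ Icc α β, χ x = q.eval x) →
      IntegrableOn (fun x => iteratedDeriv 2 u x * χ x) (Ioc α β) := by
    intro q α β he
    have h0 : IntegrableOn (fun x => iteratedDeriv 2 u x * q.eval x) (Ioc α β) :=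
      (hcd2.mul q.continuous).integrableOn_Ioc
    exact h0.congr_fun (fun x hx => by rw [he x (Ioc_subset_Icc_self hx)]) measurableSet_Ioc
  have int2 : ∀ (q : Polynomial ℝ) (α β : ℝ), (∀ x ∈ Icc α β, χ x = q.eval x) →
      IntegrableOn (fun x => deriv u x * deriv χ x) (Ioc α β) := by
    intro q α β he
    rw [integrableOn_Ioc_iff_integrableOn_Ioo]
    have h0 : IntegrableOn (fun x => deriv u x * q.derivative.eval x) (Ioo α β) :=
      ((hcd.mul q.derivative.continuous).integrableOn_Ioc).mono_set Ioo_subset_Ioc_self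
    exact h0.congr_fun (fun x hx => by rw [hder q α β he x hx]) measurableSet_Ioo
  have hJ : ∀ (q : Polynomial ℝ) (α β : ℝ), α ≤ β → (∀ x ∈ Icc α β, χ x = q.eval x) →
      ∫ x in Ioc α β, deriv u x * deriv χ x
        = ∫ x in α..β, deriv u x * q.derivative.eval x := by
    intro q α β hab he
    rw [integral_Ioc_eq_integral_Ioo,
      setIntegral_congr_fun measurableSet_Ioo
        (fun x hx => by simp only [hder q α β he x hx] :
          EqOn (fun x => deriv u x * deriv χ x)
            (fun x => deriv u x * q.derivative.eval x) (Ioo α β)),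
      ← integral_Ioc_eq_integral_Ioo, ← intervalIntegral.integral_of_le hab]
  have hI : ∀ (q : Polynomial ℝ) (α β : ℝ), α ≤ β → (∀ x ∈ Icc α β, χ x = q.eval x) →
      ∫ x in Ioc α β, iteratedDeriv 2 u x * χ x
        = deriv u β * q.eval β - deriv u α * q.eval α
          - ∫ x in α..β, deriv u x * q.derivative.eval x := by
    intro q α β hab he
    rw [← intervalIntegral.integral_of_le hab,
      intervalIntegral.integral_congr
        ((fun x hx => by simp only [he x (by rwa [Set.uIcc_of_le hab] at hx)]) :
          EqOn (fun x => iteratedDeriv 2 u x * χ x)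
            (fun x => iteratedDeriv 2 u x * q.eval x) (Set.uIcc α β))]
    exact ibp_piece hu q α β
  by_cases hA : a < 1 / 4
  · obtain ⟨⟨q1, hdg1, he1⟩, ⟨q2, hdg2, he2⟩, ⟨q3, hdg3, he3⟩⟩ := hχ.1.2.1 hA
    have ha1 : a ≤ 1 - a := by linarith
    have ha2 : (1:ℝ) - a ≤ 1 := by linarith
    have hb0 : Polynomial.eval 0 q1 = 0 := (he1 0 ⟨le_refl _, ha0.le⟩).symm.trans hχ.2.1
    have hb1 : Polynomial.eval 1 q3 = 0 := (he3 1 ⟨ha2, le_refl _⟩).symm.trans hχ.2.2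
    have hm1 : Polynomial.eval a q1 = Polynomial.eval a q2 :=
      (he1 a ⟨ha0.le, le_refl _⟩).symm.trans (he2 a ⟨le_refl _, ha1⟩)
    have hm2 : Polynomial.eval (1 - a) q2 = Polynomial.eval (1 - a) q3 :=
      (he2 (1 - a) ⟨ha1, le_refl _⟩).symm.trans (he3 (1 - a) ⟨le_refl _, ha2⟩)
    have hsplit : ∀ F : ℝ → ℝ, IntegrableOn F (Ioc 0 a) → IntegrableOn F (Ioc a (1 - a)) →
        IntegrableOn F (Ioc (1 - a) 1) →
        ∫ x in Ioo (0:ℝ) 1, F x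
          = (∫ x in Ioc (0:ℝ) a, F x) + (∫ x in Ioc a (1 - a), F x)
            + ∫ x in Ioc (1 - a) 1, F x := by
      intro F i1 i2 i3
      have e1 : Ioc (0:ℝ) a ∪ Ioc a (1 - a) = Ioc 0 (1 - a) :=
        Set.Ioc_union_Ioc_eq_Ioc ha0.le ha1
      have e2 : Ioc (0:ℝ) (1 - a) ∪ Ioc (1 - a) 1 = Ioc 0 1 :=
        Set.Ioc_union_Ioc_eq_Ioc (by linarith) ha2
      rw [← integral_Ioc_eq_integral_Ioo, ← e2,
        setIntegral_union (Set.Ioc_disjoint_Ioc_of_le le_rfl) measurableSet_Ioc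
          (e1 ▸ (i1.union i2)) i3, ← e1,
        setIntegral_union (Set.Ioc_disjoint_Ioc_of_le le_rfl) measurableSet_Ioc i1 i2]
    rw [hsplit _ (int1 q1 _ _ he1) (int1 q2 _ _ he2) (int1 q3 _ _ he3),
      hsplit _ (int2 q1 _ _ he1) (int2 q2 _ _ he2) (int2 q3 _ _ he3),
      hI q1 0 a ha0.le he1, hI q2 a (1 - a) ha1 he2, hI q3 (1 - a) 1 ha2 he3,
      hJ q1 0 a ha0.le he1, hJ q2 a (1 - a) ha1 he2, hJ q3 (1 - a) 1 ha2 he3,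
      hb0, hb1, hm1, hm2]
    ring
  · obtain ⟨q, hqd, hqe⟩ := hχ.1.2.2 (le_of_not_gt hA)
    have h01 : (0:ℝ) ≤ 1 := by norm_num
    have hb0 : Polynomial.eval 0 q = 0 := (hqe 0 ⟨le_refl _, h01⟩).symm.trans hχ.2.1
    have hb1 : Polynomial.eval 1 q = 0 := (hqe 1 ⟨h01, le_refl _⟩).symm.trans hχ.2.2
    rw [← integral_Ioc_eq_integral_Ioo, hI q 0 1 h01 hqe, ← integral_Ioc_eq_integral_Ioo,
      hJ q 0 1 h01 hqe, hb0, hb1]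
    ring

end Stmt12

/-- chain of inequalities relating Galerkin approximation and
the reduced projection. -/
theorem statement12 (Cf γf Cb γb cb : ℝ)
    (hCf : 0 < Cf) (hγf : 0 < γf) (hCb : 0 < Cb) (hγb : 0 < γb) (hcb : 0 < cb)
    (b f : ℝ → ℝ) (hdata : DataHyp Cf γf Cb γb cb b f)
    (ε : ℝ) (hε : ε ∈ Ioc (0:ℝ) 1)
    (u : ℝ → ℝ) (hu : IsSolution ε b f u)
    (lam : ℝ) (hlam : 0 < lam) (p : ℕ) (hp : 0 < p)
    (uF : ℝ → ℝ) (huF : IsGalerkin lam ε p b f uF)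
    (Pu : ℝ → ℝ) (hPu : IsP0 b lam ε p u Pu) :
    ε * L2N (deriv fun x => uF x - Pu x) (Ioo 0 1)
        ≤ energyNorm ε b (fun x => uF x - Pu x) ∧
      energyNorm ε b (fun x => uF x - Pu x)
        ≤ ε * L2N (deriv fun x => u x - Pu x) (Ioo 0 1) := by
  obtain ⟨hε0, hε1⟩ := hε
  obtain ⟨hbC, hfC, hfb, hbb, hbpos⟩ := hdata
  obtain ⟨huC, hueq, hu0, hu1⟩ := hu
  have hχS : MemS0 lam ε p (fun x => uF x - Pu x) := Stmt12.memS0_sub huF.1 hPu.1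
  obtain ⟨W1, D1, nW1, nD1, heq1, hae1⟩ := Stmt12.rep hlam hp hε0 huF.1.1
  obtain ⟨W2, D2, nW2, nD2, heq2, hae2⟩ := Stmt12.rep hlam hp hε0 hPu.1.1
  have hbc : Continuous b := hbC.continuous
  have huc : Continuous u := huC.continuous
  have hudc : Continuous (deriv u) := huC.continuous_deriv (by simp)
  have hud2c : Continuous (iteratedDeriv 2 u) := by
    rw [iteratedDeriv_eq_iterate]
    exact ((huC.of_le (by simp) : ContDiff ℝ ((⊤ : ℕ∞) : WithTop ℕ∞) u).iterate_deriv 2).continuous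
  have nb := Stmt12.Nice.of_continuous hbc
  have nu := Stmt12.Nice.of_continuous huc
  have nud := Stmt12.Nice.of_continuous hudc
  have nud2 := Stmt12.Nice.of_continuous hud2c
  have hW : ∀ x ∈ Icc (0:ℝ) 1, uF x - Pu x = W1 x - W2 x := fun x hx => by
    rw [heq1 x hx, heq2 x hx]
  have haeχ : ∀ᵐ x ∂(volume.restrict (Ioo (0:ℝ) 1)),
      deriv (fun y => uF y - Pu y) x = D1 x - D2 x := by
    filter_upwards [hae1, hae2] with x h1 h2
    exact (h1.1.sub h2.1).deriv
  have haeφ : ∀ᵐ x ∂(volume.restrict (Ioo (0:ℝ) 1)),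
      deriv (fun y => u y - Pu y) x = deriv u x - D2 x := by
    filter_upwards [hae2] with x h2
    exact (((huC.differentiable (by simp) x).hasDerivAt).sub h2.1).deriv
  have haeuF : ∀ᵐ x ∂(volume.restrict (Ioo (0:ℝ) 1)), deriv uF x = D1 x := by
    filter_upwards [hae1] with x h1 using h1.2
  -- integrabilities
  have iDχDχ : IntegrableOn (fun x => (D1 x - D2 x) * (D1 x - D2 x)) (Ioo 0 1) :=
    ((nD1.sub nD2).mul (nD1.sub nD2)).integrableOnIoo
  have iD1Dχ : IntegrableOn (fun x => D1 x * (D1 x - D2 x)) (Ioo 0 1) :=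
    (nD1.mul (nD1.sub nD2)).integrableOnIoo
  have iD2Dχ : IntegrableOn (fun x => D2 x * (D1 x - D2 x)) (Ioo 0 1) :=
    (nD2.mul (nD1.sub nD2)).integrableOnIoo
  have iuDχ : IntegrableOn (fun x => deriv u x * (D1 x - D2 x)) (Ioo 0 1) :=
    (nud.mul (nD1.sub nD2)).integrableOnIoo
  have iDφDφ : IntegrableOn (fun x => (deriv u x - D2 x) * (deriv u x - D2 x)) (Ioo 0 1) :=
    ((nud.sub nD2).mul (nud.sub nD2)).integrableOnIoo
  have iDφDχ : IntegrableOn (fun x => (deriv u x - D2 x) * (D1 x - D2 x)) (Ioo 0 1) :=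
    ((nud.sub nD2).mul (nD1.sub nD2)).integrableOnIoo
  have ibW1Wχ : IntegrableOn (fun x => b x * W1 x * (W1 x - W2 x)) (Ioo 0 1) :=
    ((nb.mul nW1).mul (nW1.sub nW2)).integrableOnIoo
  have ibW2Wχ : IntegrableOn (fun x => b x * W2 x * (W1 x - W2 x)) (Ioo 0 1) :=
    ((nb.mul nW2).mul (nW1.sub nW2)).integrableOnIoo
  have ibuWχ : IntegrableOn (fun x => b x * u x * (W1 x - W2 x)) (Ioo 0 1) :=
    ((nb.mul nu).mul (nW1.sub nW2)).integrableOnIoo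
  have ibuχ : IntegrableOn (fun x => b x * u x * (uF x - Pu x)) (Ioo 0 1) :=
    ibuWχ.congr_fun
      (fun x hx => by simp only [hW x (Ioo_subset_Icc_self hx)]) measurableSet_Ioo
  have iu2χ : IntegrableOn (fun x => iteratedDeriv 2 u x * (uF x - Pu x)) (Ioo 0 1) :=
    ((nud2.mul (nW1.sub nW2)).integrableOnIoo).congr_fun
      (fun x hx => by simp only [hW x (Ioo_subset_Icc_self hx)]) measurableSet_Ioo
  -- congruence equalities
  have eA : ∫ x in Ioo (0:ℝ) 1, (deriv (fun y => uF y - Pu y) x) ^ 2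
      = ∫ x in Ioo (0:ℝ) 1, (D1 x - D2 x) * (D1 x - D2 x) := by
    apply integral_congr_ae
    filter_upwards [haeχ] with x hx
    rw [hx]; ring
  have eB : ∫ x in Ioo (0:ℝ) 1, b x * (uF x - Pu x) ^ 2
      = ∫ x in Ioo (0:ℝ) 1, b x * ((W1 x - W2 x) * (W1 x - W2 x)) := by
    apply setIntegral_congr_fun measurableSet_Ioo
    intro x hx
    simp only [hW x (Ioo_subset_Icc_self hx)]; ring
  have eC : ∫ x in Ioo (0:ℝ) 1, (deriv (fun y => u y - Pu y) x) ^ 2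
      = ∫ x in Ioo (0:ℝ) 1, (deriv u x - D2 x) * (deriv u x - D2 x) := by
    apply integral_congr_ae
    filter_upwards [haeφ] with x hx
    rw [hx]; ring
  have eG1 : ∫ x in Ioo (0:ℝ) 1, deriv uF x * deriv (fun y => uF y - Pu y) x
      = ∫ x in Ioo (0:ℝ) 1, D1 x * (D1 x - D2 x) := by
    apply integral_congr_ae
    filter_upwards [haeuF, haeχ] with x h1 h2
    rw [h1, h2]
  have eG2 : ∫ x in Ioo (0:ℝ) 1, b x * uF x * (uF x - Pu x)
      = ∫ x in Ioo (0:ℝ) 1, b x * W1 x * (W1 x - W2 x) := by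
    apply setIntegral_congr_fun measurableSet_Ioo
    intro x hx
    simp only [heq1 x (Ioo_subset_Icc_self hx), heq2 x (Ioo_subset_Icc_self hx)]
  have eP : ∫ x in Ioo (0:ℝ) 1, b x * (u x - Pu x) * (uF x - Pu x)
      = ∫ x in Ioo (0:ℝ) 1, b x * (u x - W2 x) * (W1 x - W2 x) := by
    apply setIntegral_congr_fun measurableSet_Ioo
    intro x hx
    simp only [heq1 x (Ioo_subset_Icc_self hx), heq2 x (Ioo_subset_Icc_self hx)]
  have eIb : ∫ x in Ioo (0:ℝ) 1, deriv u x * deriv (fun y => uF y - Pu y) x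
      = ∫ x in Ioo (0:ℝ) 1, deriv u x * (D1 x - D2 x) := by
    apply integral_congr_ae
    filter_upwards [haeχ] with x hx
    rw [hx]
  have ebu : ∫ x in Ioo (0:ℝ) 1, b x * u x * (uF x - Pu x)
      = ∫ x in Ioo (0:ℝ) 1, b x * u x * (W1 x - W2 x) := by
    apply setIntegral_congr_fun measurableSet_Ioo
    intro x hx
    simp only [hW x (Ioo_subset_Icc_self hx)]
  -- Galerkin identity
  have hGχ := huF.2 _ hχS
  beta_reduce at hGχ
  rw [eG1, eG2] at hGχ
  -- P0 identity
  have hPχ := hPu.2 _ hχS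
  beta_reduce at hPχ
  rw [eP] at hPχ
  have t7 : ∫ x in Ioo (0:ℝ) 1, b x * (u x - W2 x) * (W1 x - W2 x)
      = (∫ x in Ioo (0:ℝ) 1, b x * u x * (W1 x - W2 x))
        - ∫ x in Ioo (0:ℝ) 1, b x * W2 x * (W1 x - W2 x) := by
    rw [← integral_sub ibuWχ ibW2Wχ]
    apply setIntegral_congr_fun measurableSet_Ioo
    intro x _
    beta_reduce
    ring
  -- weak form of the equation
  have estrong : ∫ x in Ioo (0:ℝ) 1, f x * (uF x - Pu x)
      = ∫ x in Ioo (0:ℝ) 1, (b x * u x * (uF x - Pu x)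
          - ε ^ 2 * (iteratedDeriv 2 u x * (uF x - Pu x))) := by
    apply setIntegral_congr_fun measurableSet_Ioo
    intro x hx
    simp only [← hueq x hx]; ring
  have esub : ∫ x in Ioo (0:ℝ) 1, (b x * u x * (uF x - Pu x)
          - ε ^ 2 * (iteratedDeriv 2 u x * (uF x - Pu x)))
      = (∫ x in Ioo (0:ℝ) 1, b x * u x * (uF x - Pu x))
        - ε ^ 2 * ∫ x in Ioo (0:ℝ) 1, iteratedDeriv 2 u x * (uF x - Pu x) := by
    rw [integral_sub ibuχ (iu2χ.const_mul (ε ^ 2)), integral_const_mul]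
  have hibp := Stmt12.ibp huC hlam hp hε0 hχS
  beta_reduce at hibp
  rw [eIb] at hibp
  have t5 : ∫ x in Ioo (0:ℝ) 1, f x * (uF x - Pu x)
      = (∫ x in Ioo (0:ℝ) 1, b x * u x * (uF x - Pu x))
        + ε ^ 2 * ∫ x in Ioo (0:ℝ) 1, deriv u x * (D1 x - D2 x) := by
    rw [estrong, esub, hibp]; ring
  -- linearity splittings
  have t1 : ∫ x in Ioo (0:ℝ) 1, (D1 x - D2 x) * (D1 x - D2 x)
      = (∫ x in Ioo (0:ℝ) 1, D1 x * (D1 x - D2 x))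
        - ∫ x in Ioo (0:ℝ) 1, D2 x * (D1 x - D2 x) := by
    rw [← integral_sub iD1Dχ iD2Dχ]
    apply setIntegral_congr_fun measurableSet_Ioo
    intro x _
    beta_reduce
    ring
  have t3 : ∫ x in Ioo (0:ℝ) 1, (deriv u x - D2 x) * (D1 x - D2 x)
      = (∫ x in Ioo (0:ℝ) 1, deriv u x * (D1 x - D2 x))
        - ∫ x in Ioo (0:ℝ) 1, D2 x * (D1 x - D2 x) := by
    rw [← integral_sub iuDχ iD2Dχ]
    apply setIntegral_congr_fun measurableSet_Ioo
    intro x _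
    beta_reduce
    ring
  have t2 : ∫ x in Ioo (0:ℝ) 1, b x * ((W1 x - W2 x) * (W1 x - W2 x))
      = (∫ x in Ioo (0:ℝ) 1, b x * W1 x * (W1 x - W2 x))
        - ∫ x in Ioo (0:ℝ) 1, b x * W2 x * (W1 x - W2 x) := by
    rw [← integral_sub ibW1Wχ ibW2Wχ]
    apply setIntegral_congr_fun measurableSet_Ioo
    intro x _
    beta_reduce
    ring
  -- the key energy identity
  have keyId : ε ^ 2 * (∫ x in Ioo (0:ℝ) 1, (D1 x - D2 x) * (D1 x - D2 x))
      + (∫ x in Ioo (0:ℝ) 1, b x * ((W1 x - W2 x) * (W1 x - W2 x)))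
      = ε ^ 2 * ∫ x in Ioo (0:ℝ) 1, (deriv u x - D2 x) * (D1 x - D2 x) := by
    linear_combination (ε ^ 2) * t1 + t2 - (ε ^ 2) * t3 + hGχ + t5 + ebu - t7 + hPχ
  -- Cauchy-Schwarz
  have hCS := Stmt12.cauchy_schwarz iDφDφ iDχDχ iDφDχ
  -- nonnegativity
  have hA0 : 0 ≤ ∫ x in Ioo (0:ℝ) 1, (deriv (fun y => uF y - Pu y) x) ^ 2 :=
    setIntegral_nonneg measurableSet_Ioo fun x _ => sq_nonneg _
  have hB0 : 0 ≤ ∫ x in Ioo (0:ℝ) 1, b x * (uF x - Pu x) ^ 2 :=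
    setIntegral_nonneg measurableSet_Ioo fun x hx =>
      mul_nonneg (hcb.le.trans (hbpos x (Ioo_subset_Icc_self hx))) (sq_nonneg _)
  simp only [L2N, energyNorm]
  set A := ∫ x in Ioo (0:ℝ) 1, (deriv (fun y => uF y - Pu y) x) ^ 2 with hAdef
  set B := ∫ x in Ioo (0:ℝ) 1, b x * (uF x - Pu x) ^ 2 with hBdef
  set C := ∫ x in Ioo (0:ℝ) 1, (deriv (fun y => u y - Pu y) x) ^ 2 with hCdef
  have hC0 : 0 ≤ C := setIntegral_nonneg measurableSet_Ioo fun x _ => sq_nonneg _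
  have g1 : Real.sqrt (ε ^ 2 * A) = ε * Real.sqrt A := by
    rw [Real.sqrt_mul (sq_nonneg ε), Real.sqrt_sq hε0.le]
  have goal1 : ε * Real.sqrt A ≤ Real.sqrt (ε ^ 2 * A + B) := by
    rw [← g1]
    exact Real.sqrt_le_sqrt (by linarith)
  refine ⟨goal1, ?_⟩
  -- second inequality
  have hX : ε ^ 2 * A + B = ε ^ 2 * ∫ x in Ioo (0:ℝ) 1, (deriv u x - D2 x) * (D1 x - D2 x) := by
    rw [eA, eB]
    exact keyId
  have hXnn : 0 ≤ ε ^ 2 * A + B := add_nonneg (mul_nonneg (sq_nonneg ε) hA0) hB0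
  set E := Real.sqrt (ε ^ 2 * A + B) with hEdef
  have hEsq : E * E = ε ^ 2 * A + B := Real.mul_self_sqrt hXnn
  have hsqA : Real.sqrt (∫ x in Ioo (0:ℝ) 1, (D1 x - D2 x) * (D1 x - D2 x)) = Real.sqrt A :=
    congrArg Real.sqrt eA.symm
  have hsqC : Real.sqrt (∫ x in Ioo (0:ℝ) 1, (deriv u x - D2 x) * (deriv u x - D2 x))
      = Real.sqrt C :=
    congrArg Real.sqrt eC.symm
  have h2 : E * E ≤ (ε * Real.sqrt C) * E := by
    calc E * E = ε ^ 2 * ∫ x in Ioo (0:ℝ) 1, (deriv u x - D2 x) * (D1 x - D2 x) := by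
          rw [hEsq, hX]
      _ ≤ ε ^ 2 * (Real.sqrt C * Real.sqrt A) := by
          apply mul_le_mul_of_nonneg_left _ (sq_nonneg ε)
          rw [← hsqA, ← hsqC]
          exact hCS
      _ = (ε * Real.sqrt C) * (ε * Real.sqrt A) := by ring
      _ ≤ (ε * Real.sqrt C) * E := by
          apply mul_le_mul_of_nonneg_left goal1
          positivity
  have hEnn : 0 ≤ E := by rw [hEdef]; positivity
  rcases hEnn.eq_or_lt with hE | hE
  · rw [← hE]
    positivity
  · exact (mul_le_mul_iff_left₀ hE).1 h2
end

section
/- There exists an absolute constant C > 0 such that for every integer p ≥ 1, every δ ∈ (0,1], and all real polynomials π₁, π₂ in two variables of degree at most p in each variable, one has ∫₀¹ ∫₀^{δ} |π₁(x,y) π₂(x,y)| dx dy ≤ C p √δ ‖π₁‖_{L²([0,1]²)} ‖π₂‖_{L²([0,δ]×[0,1])}. -/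
open MeasureTheory Set

/-- `g` is a polynomial in two variables of degree at most `p` in each variable. -/
def Poly2 (p : ℕ) (g : ℝ → ℝ → ℝ) : Prop :=
  ∃ c : Fin (p + 1) → Fin (p + 1) → ℝ,
    ∀ x y : ℝ, g x y = ∑ i : Fin (p + 1), ∑ j : Fin (p + 1), c i j * x ^ (i : ℕ) * y ^ (j : ℕ)

/-- The `L²` norm of `g` over a set `s ⊆ ℝ²`. -/
noncomputable def L2two (g : ℝ → ℝ → ℝ) (s : Set (ℝ × ℝ)) : ℝ :=
  Real.sqrt (∫ z in s, (g z.1 z.2) ^ 2)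

/-!
Fix `y`: then `x ↦ π₁(x, y)` is a polynomial `q` of degree `≤ p`, and `θ ↦ q((1 + cos θ)/2)` is a
trigonometric polynomial of degree `≤ p`. Bounding a trigonometric polynomial pointwise by its
coefficients and using Parseval gives `sup q² ≲ p ∫₀^{2π} q((1 + cos θ)/2)² dθ`; away from
`θ ∈ {0, π}` the weight `sin θ` of the substitution `x = (1 + cos θ)/2` is `≳ 1/p`, and near these
points the integral is absorbed by the sup bound. Altogether `sup_{[0,1]} q² ≤ 12 (p+1)² ∫₀¹ q²`.
Integrating in `x` over `(0, δ)` and in `y` gives `‖π₁‖²_{L²(strip)} ≲ p² δ ‖π₁‖²_{L²([0,1]²)}`,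
and Cauchy–Schwarz on the strip finishes the proof.
-/

open Polynomial

section TrigPoly

open Complex

noncomputable def expMode (k : ℤ) (θ : ℝ) : ℂ := exp (k * θ * I)

lemma expMode_mul_conj (k l : ℤ) (θ : ℝ) :
    expMode k θ * (starRingEnd ℂ) (expMode l θ) = expMode (k - l) θ := by
  simp only [expMode, ← exp_conj, map_mul, conj_ofReal, conj_I, map_intCast, ← exp_add]
  push_cast
  ring_nf

lemma norm_expMode (k : ℤ) (θ : ℝ) : ‖expMode k θ‖ = 1 := by
  rw [expMode, ← ofReal_intCast, ← ofReal_mul, norm_exp_ofReal_mul_I]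

lemma continuous_expMode (k : ℤ) : Continuous (expMode k) := by
  unfold expMode; fun_prop

lemma integral_expMode (k : ℤ) :
    ∫ θ in (0 : ℝ)..2 * Real.pi, expMode k θ = if k = 0 then (2 * Real.pi : ℂ) else 0 := by
  split_ifs with hk
  · simp [expMode, hk]
  · have hkI : (k * I : ℂ) ≠ 0 := by simp [hk]
    have hexp : expMode k = fun θ : ℝ => exp (k * I * θ) := by
      ext θ; rw [expMode]; ring_nf
    rw [hexp, integral_exp_mul_complex hkI]
    have : (k : ℂ) * I * ((2 * Real.pi : ℝ) : ℂ) = k * (2 * Real.pi * I) := by push_cast; ring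
    rw [this, exp_int_mul_two_pi_mul_I]
    simp

lemma integral_norm_sq_sum_expMode (s : Finset ℤ) (c : ℤ → ℂ) :
    ∫ θ in (0 : ℝ)..2 * Real.pi, ‖∑ k ∈ s, c k * expMode k θ‖ ^ 2
      = 2 * Real.pi * ∑ k ∈ s, ‖c k‖ ^ 2 := by
  have hexpand : ∀ θ, ((‖∑ k ∈ s, c k * expMode k θ‖ ^ 2 : ℝ) : ℂ)
      = ∑ k ∈ s, ∑ l ∈ s, c k * (starRingEnd ℂ) (c l) * expMode (k - l) θ := by
    intro θ
    rw [ofReal_pow, ← mul_conj', map_sum, Finset.sum_mul_sum]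
    refine Finset.sum_congr rfl fun k _ => Finset.sum_congr rfl fun l _ => ?_
    rw [map_mul, ← expMode_mul_conj]
    ring
  have hcont : ∀ k l : ℤ,
      Continuous fun θ => c k * (starRingEnd ℂ) (c l) * expMode (k - l) θ :=
    fun k l => continuous_const.mul (continuous_expMode _)
  apply Complex.ofReal_injective
  rw [← intervalIntegral.integral_ofReal, intervalIntegral.integral_congr fun θ _ => hexpand θ,
    intervalIntegral.integral_finsetSum fun k _ =>
      (continuous_finsetSum s fun l _ => hcont k l).intervalIntegrable _ _]
  simp only [intervalIntegral.integral_finsetSum fun l _ => (hcont _ l).intervalIntegrable _ _,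
    intervalIntegral.integral_const_mul, integral_expMode, sub_eq_zero, mul_ite,
    mul_zero, Finset.sum_ite_eq, mul_conj']
  push_cast
  rw [Finset.mul_sum]
  refine Finset.sum_congr rfl fun k hk => ?_
  rw [if_pos hk]
  ring

lemma norm_sq_sum_expMode_le (s : Finset ℤ) (c : ℤ → ℂ) (θ : ℝ) :
    ‖∑ k ∈ s, c k * expMode k θ‖ ^ 2 ≤ s.card * ∑ k ∈ s, ‖c k‖ ^ 2 := by
  have hnorm : ‖∑ k ∈ s, c k * expMode k θ‖ ≤ ∑ k ∈ s, ‖c k‖ := by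
    refine (norm_sum_le _ _).trans (le_of_eq (Finset.sum_congr rfl fun k _ => ?_))
    rw [norm_mul, norm_expMode, mul_one]
  exact (pow_le_pow_left₀ (norm_nonneg _) hnorm 2).trans sq_sum_le_card_mul_sum_sq

def trigPolyDeg (p : ℕ) : Submodule ℂ (ℝ → ℂ) :=
  Submodule.span ℂ (expMode '' ↑(Finset.Icc (-(p : ℤ)) p))

lemma expMode_mem_trigPolyDeg {p : ℕ} {k : ℤ} (hk : |k| ≤ p) : expMode k ∈ trigPolyDeg p :=
  Submodule.subset_span ⟨k, by simpa [abs_le] using hk, rfl⟩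

lemma trigPolyDeg_mono {p p' : ℕ} (h : p ≤ p') : trigPolyDeg p ≤ trigPolyDeg p' :=
  Submodule.span_mono <| image_mono <| by
    intro k hk
    simp only [Finset.coe_Icc, mem_Icc] at hk ⊢
    omega

lemma norm_sq_le_integral_of_mem_trigPolyDeg {p : ℕ} {f : ℝ → ℂ} (hf : f ∈ trigPolyDeg p)
    (θ : ℝ) :
    ‖f θ‖ ^ 2 ≤ (2 * p + 1) / (2 * Real.pi) * ∫ θ in (0 : ℝ)..2 * Real.pi, ‖f θ‖ ^ 2 := by
  obtain ⟨c, rfl⟩ := (Submodule.mem_span_image_finset_iff_exists_fun' ℂ).mp hf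
  simp only [Finset.sum_apply, Pi.smul_apply, smul_eq_mul, integral_norm_sq_sum_expMode]
  have hcard : (Finset.Icc (-(p : ℤ)) p).card = 2 * p + 1 := by
    rw [Int.card_Icc]; omega
  calc _ ≤ (2 * p + 1 : ℝ) * ∑ k ∈ Finset.Icc (-(p : ℤ)) p, ‖c k‖ ^ 2 := by
        simpa [hcard] using norm_sq_sum_expMode_le (Finset.Icc (-(p : ℤ)) p) c θ
    _ = _ := by field_simp

lemma mul_cos_mem_trigPolyDeg {p : ℕ} {f : ℝ → ℂ} (hf : f ∈ trigPolyDeg p) :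
    (fun θ => (Real.cos θ : ℂ) * f θ) ∈ trigPolyDeg (p + 1) := by
  have hmap : (trigPolyDeg p).map (LinearMap.mulLeft ℂ fun θ : ℝ => (Real.cos θ : ℂ))
      ≤ trigPolyDeg (p + 1) := by
    rw [trigPolyDeg, Submodule.map_span_le]
    rintro _ ⟨k, hk, rfl⟩
    have hcos : (fun θ : ℝ => (Real.cos θ : ℂ)) * expMode k
        = (1 / 2 : ℂ) • expMode (k + 1) + (1 / 2 : ℂ) • expMode (k - 1) := by
      ext θ
      simp only [Pi.mul_apply, Pi.add_apply, Pi.smul_apply, smul_eq_mul, ofReal_cos, cos, expMode]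
      push_cast
      simp only [add_div, add_mul, div_mul_eq_mul_div, ← exp_add]
      ring_nf
    simp only [Finset.coe_Icc, mem_Icc] at hk
    rw [LinearMap.mulLeft_apply, hcos]
    exact add_mem (Submodule.smul_mem _ _ (expMode_mem_trigPolyDeg (by rw [abs_le]; omega)))
      (Submodule.smul_mem _ _ (expMode_mem_trigPolyDeg (by rw [abs_le]; omega)))
  exact hmap ⟨f, hf, rfl⟩

lemma cos_pow_mem_trigPolyDeg (j : ℕ) : (fun θ => (Real.cos θ : ℂ) ^ j) ∈ trigPolyDeg j := by
  induction j with
  | zero =>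
    convert expMode_mem_trigPolyDeg (p := 0) (k := 0) le_rfl using 1
    ext θ; simp [expMode]
  | succ j ih => simpa [pow_succ'] using mul_cos_mem_trigPolyDeg ih

lemma Polynomial.eval_cos_mem_trigPolyDeg {q : Polynomial ℝ} {p : ℕ} (hq : q.natDegree ≤ p) :
    (fun θ => ((q.eval (Real.cos θ) : ℝ) : ℂ)) ∈ trigPolyDeg p := by
  have h : (fun θ => ((q.eval (Real.cos θ) : ℝ) : ℂ))
      = ∑ j ∈ Finset.range (p + 1), (q.coeff j : ℂ) • fun θ => (Real.cos θ : ℂ) ^ j := by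
    ext θ
    simp [Polynomial.eval_eq_sum_range' (Nat.lt_succ_of_le hq)]
  rw [h]
  exact Submodule.sum_mem _ fun j hj => Submodule.smul_mem _ _ <|
    trigPolyDeg_mono (Nat.lt_succ_iff.mp (Finset.mem_range.mp hj)) (cos_pow_mem_trigPolyDeg j)

lemma Polynomial.sq_eval_cos_le_integral {q : ℝ[X]} {p : ℕ} (hq : q.natDegree ≤ p)
    (θ : ℝ) :
    q.eval (Real.cos θ) ^ 2
      ≤ (2 * p + 1) / (2 * Real.pi) * ∫ φ in (0 : ℝ)..2 * Real.pi, q.eval (Real.cos φ) ^ 2 := by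
  simpa only [norm_real, Real.norm_eq_abs, sq_abs] using
    norm_sq_le_integral_of_mem_trigPolyDeg (eval_cos_mem_trigPolyDeg hq) θ

end TrigPoly

section Calculus

open Real

lemma integral_comp_cos_zero_two_pi {f : ℝ → ℝ} (hf : Continuous f) :
    ∫ θ in (0 : ℝ)..2 * π, f (cos θ) = 2 * ∫ θ in (0 : ℝ)..π, f (cos θ) := by
  have hi : ∀ a b : ℝ, IntervalIntegrable (fun θ => f (cos θ)) volume a b :=
    fun a b => (hf.comp continuous_cos).intervalIntegrable a b
  have hreflect : ∫ θ in π..2 * π, f (cos θ) = ∫ θ in (0 : ℝ)..π, f (cos θ) := by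
    have h := intervalIntegral.integral_comp_sub_left (fun θ => f (cos θ)) (2 * π) (a := 0) (b := π)
    simp only [cos_two_pi_sub, sub_zero] at h
    rw [h, show 2 * π - π = π by ring]
  rw [← intervalIntegral.integral_add_adjacent_intervals (hi 0 π) (hi π (2 * π)), hreflect]
  ring

lemma integral_comp_half_one_add_cos_mul_sin {f : ℝ → ℝ} (hf : Continuous f) :
    ∫ θ in (0 : ℝ)..π, f ((1 + cos θ) / 2) * sin θ = 2 * ∫ x in (0 : ℝ)..1, f x := by
  have h := intervalIntegral.integral_comp_mul_deriv (a := 0) (b := π)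
    (f := fun θ => (1 + cos θ) / 2) (f' := fun θ => -sin θ / 2)
    (fun θ _ => ((hasDerivAt_cos θ).const_add 1).div_const 2) (by fun_prop) hf
  have hrw : ∀ θ, f ((1 + cos θ) / 2) * (-sin θ / 2) = -(1 / 2) * (f ((1 + cos θ) / 2) * sin θ) :=
    fun θ => by ring
  simp only [Function.comp_def, hrw, intervalIntegral.integral_const_mul, cos_zero, cos_pi] at h
  norm_num [intervalIntegral.integral_symm 0 1] at h
  linarith

lemma two_div_pi_mul_le_sin {η θ : ℝ} (hη : 0 ≤ η) (hηθ : η ≤ θ) (hθη : θ ≤ π - η) :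
    2 / π * η ≤ sin θ := by
  rcases le_total θ (π / 2) with hθ | hθ
  · calc 2 / π * η ≤ 2 / π * θ := by gcongr
      _ ≤ sin θ := mul_le_sin (hη.trans hηθ) hθ
  · calc 2 / π * η ≤ 2 / π * (π - θ) := by gcongr; linarith
      _ ≤ sin (π - θ) := mul_le_sin (by linarith) (by linarith)
      _ = sin θ := sin_pi_sub θ

lemma integral_le_add_integral_mul_sin {f : ℝ → ℝ} (hf : Continuous f) (hf0 : ∀ θ, 0 ≤ f θ)
    {M η : ℝ} (hM : ∀ θ, f θ ≤ M) (hη : 0 < η) (hηπ : η ≤ π / 2) :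
    ∫ θ in (0 : ℝ)..π, f θ ≤ 2 * η * M + π / (2 * η) * ∫ θ in (0 : ℝ)..π, f θ * sin θ := by
  have hfs : Continuous fun θ => f θ * sin θ := hf.mul continuous_sin
  have hsplit : ∀ g : ℝ → ℝ, Continuous g →
      ∫ θ in (0 : ℝ)..π, g θ
        = (∫ θ in (0 : ℝ)..η, g θ) + (∫ θ in η..π - η, g θ) + ∫ θ in π - η..π, g θ := by
    intro g hg
    rw [intervalIntegral.integral_add_adjacent_intervals (hg.intervalIntegrable _ _)
        (hg.intervalIntegrable _ _),
      intervalIntegral.integral_add_adjacent_intervals (hg.intervalIntegrable _ _)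
        (hg.intervalIntegrable _ _)]
  have hend : ∀ a b, a ≤ b → ∫ θ in a..b, f θ ≤ (b - a) * M := fun a b hab => by
    simpa using intervalIntegral.integral_mono_on hab (hf.intervalIntegrable _ _)
      (intervalIntegrable_const (μ := volume)) fun θ _ => hM θ
  have hmid : ∫ θ in η..π - η, f θ ≤ π / (2 * η) * ∫ θ in η..π - η, f θ * sin θ := by
    rw [← intervalIntegral.integral_const_mul]
    refine intervalIntegral.integral_mono_on (by linarith) (hf.intervalIntegrable _ _)
      ((continuous_const.mul hfs).intervalIntegrable _ _) fun θ hθ => ?_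
    have hsin := two_div_pi_mul_le_sin hη.le hθ.1 hθ.2
    calc f θ = π / (2 * η) * (2 / π * η) * f θ := by field_simp
      _ ≤ π / (2 * η) * sin θ * f θ := by gcongr; exact hf0 θ
      _ = π / (2 * η) * (f θ * sin θ) := by ring
  have hfs0 : ∀ a b, 0 ≤ a → b ≤ π → a ≤ b → 0 ≤ ∫ θ in a..b, f θ * sin θ := fun a b ha hb hab =>
    intervalIntegral.integral_nonneg hab fun θ hθ =>
      mul_nonneg (hf0 θ) (sin_nonneg_of_nonneg_of_le_pi (ha.trans hθ.1) (hθ.2.trans hb))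
  have h1 := hfs0 0 η le_rfl (by linarith) hη.le
  have h3 := hfs0 (π - η) π (by linarith) le_rfl (by linarith)
  have hfactor : 0 ≤ π / (2 * η) := by positivity
  rw [hsplit f hf, hsplit _ hfs]
  nlinarith [hend 0 η hη.le, hend (π - η) π (by linarith)]

end Calculus

section Nikolskii

open Real

variable {q : ℝ[X]} {p : ℕ}

lemma Polynomial.sq_eval_half_one_add_cos_le (hq : q.natDegree ≤ p) (θ : ℝ) :
    q.eval ((1 + cos θ) / 2) ^ 2
      ≤ (2 * p + 1) / (2 * π) * ∫ φ in (0 : ℝ)..2 * π, q.eval ((1 + cos φ) / 2) ^ 2 := by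
  set r := q.comp (C 2⁻¹ * X + C 2⁻¹)
  have hr : ∀ c, r.eval c = q.eval ((1 + c) / 2) := fun c => by simp [r]; ring_nf
  have hr_deg : r.natDegree ≤ p := natDegree_comp_le.trans <| by
    simpa using Nat.mul_le_mul hq (natDegree_linear_le (a := (2⁻¹ : ℝ)) (b := 2⁻¹))
  simpa only [hr] using r.sq_eval_cos_le_integral hr_deg θ

lemma Polynomial.integral_sq_half_one_add_cos_le (hq : q.natDegree ≤ p) :
    ∫ θ in (0 : ℝ)..2 * π, q.eval ((1 + cos θ) / 2) ^ 2
      ≤ 36 * (p + 1) * ∫ x in (0 : ℝ)..1, q.eval x ^ 2 := by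
  set A := ∫ θ in (0 : ℝ)..2 * π, q.eval ((1 + cos θ) / 2) ^ 2
  set M := (2 * p + 1) / (2 * π) * A
  have hA : A = 2 * ∫ θ in (0 : ℝ)..π, q.eval ((1 + cos θ) / 2) ^ 2 :=
    integral_comp_cos_zero_two_pi (f := fun c => q.eval ((1 + c) / 2) ^ 2) (by fun_prop)
  have hsin : ∫ θ in (0 : ℝ)..π, q.eval ((1 + cos θ) / 2) ^ 2 * sin θ
      = 2 * ∫ x in (0 : ℝ)..1, q.eval x ^ 2 :=
    integral_comp_half_one_add_cos_mul_sin (f := fun x => q.eval x ^ 2) (by fun_prop)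
  -- `η` makes the end intervals contribute `2 η M ≤ A / 6`,
  -- while `sin ≥ 1 / (6 (p + 1))` between them
  set η := π / (12 * (p + 1))
  have hη : 0 < η := by positivity
  have hηπ : η ≤ π / 2 := by
    rw [div_le_div_iff₀ (by positivity) two_pos]; nlinarith [pi_pos]
  have hsplit := integral_le_add_integral_mul_sin (by fun_prop) (fun θ => sq_nonneg _)
    (q.sq_eval_half_one_add_cos_le hq) hη hηπ
  have hηM : 2 * η * M = (2 * p + 1) / (12 * (p + 1)) * A := by
    simp only [η, M]; field_simp
  have hπη : π / (2 * η) = 6 * (p + 1) := by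
    simp only [η]; field_simp; ring
  have hA0 : 0 ≤ A := intervalIntegral.integral_nonneg (by positivity) fun θ _ => sq_nonneg _
  have hcoef : (2 * p + 1) / (12 * (p + 1)) * A ≤ A / 6 := by
    rw [div_mul_eq_mul_div, div_le_div_iff₀ (by positivity) (by norm_num)]; nlinarith
  rw [hsin, hηM, hπη] at hsplit
  linarith

lemma Polynomial.sq_eval_le_integral (hq : q.natDegree ≤ p) {u : ℝ} (hu : u ∈ Icc (0 : ℝ) 1) :
    q.eval u ^ 2 ≤ 12 * (p + 1) ^ 2 * ∫ x in (0 : ℝ)..1, q.eval x ^ 2 := by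
  set B := ∫ x in (0 : ℝ)..1, q.eval x ^ 2
  have hB0 : 0 ≤ B := intervalIntegral.integral_nonneg zero_le_one fun x _ => sq_nonneg _
  have hp : (0 : ℝ) ≤ p + 1 := by positivity
  have hπ : 36 * (2 * p + 1) ≤ 24 * π * (p + 1) := by nlinarith [pi_gt_three]
  have hu' : (1 + cos (arccos (2 * u - 1))) / 2 = u := by
    rw [cos_arccos (by linarith [hu.1]) (by linarith [hu.2])]; ring
  calc q.eval u ^ 2
      ≤ (2 * p + 1) / (2 * π) * ∫ θ in (0 : ℝ)..2 * π, q.eval ((1 + cos θ) / 2) ^ 2 := by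
        simpa only [hu'] using q.sq_eval_half_one_add_cos_le hq (arccos (2 * u - 1))
    _ ≤ (2 * p + 1) / (2 * π) * (36 * (p + 1) * B) :=
        mul_le_mul_of_nonneg_left (q.integral_sq_half_one_add_cos_le hq) (by positivity)
    _ ≤ 12 * (p + 1) ^ 2 * B := by
        rw [div_mul_eq_mul_div, div_le_iff₀ (by positivity)]
        nlinarith [mul_le_mul_of_nonneg_left hπ (mul_nonneg hp hB0)]

end Nikolskii

lemma integral_abs_mul_le_sqrt_mul_sqrt {α : Type*} [MeasurableSpace α] {μ : Measure α}
    {f g : α → ℝ} (hf : MemLp f 2 μ) (hg : MemLp g 2 μ) :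
    ∫ a, |f a * g a| ∂μ ≤ √(∫ a, f a ^ 2 ∂μ) * √(∫ a, g a ^ 2 ∂μ) := by
  have h := integral_mul_le_Lp_mul_Lq_of_nonneg Real.HolderConjugate.two_two
    (Filter.Eventually.of_forall fun a => abs_nonneg (f a))
    (Filter.Eventually.of_forall fun a => abs_nonneg (g a))
    (by rw [ENNReal.ofReal_ofNat]; exact hf.abs) (by rw [ENNReal.ofReal_ofNat]; exact hg.abs)
  simpa only [abs_mul, Real.sqrt_eq_rpow, Real.rpow_two, sq_abs] using h

lemma setIntegral_prod_le_mul_measureReal {α β : Type*} [MeasurableSpace α] [MeasurableSpace β]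
    {μ : Measure α} {ν : Measure β} [SFinite μ] [SFinite ν] {F : α × β → ℝ} {s s' : Set α}
    {t : Set β} {K : ℝ} (hs : MeasurableSet s) (ht : MeasurableSet t) (hμs : μ s ≠ ⊤)
    (hF : IntegrableOn F (s ×ˢ t) (μ.prod ν)) (hF' : IntegrableOn F (s' ×ˢ t) (μ.prod ν))
    (hle : ∀ x ∈ s, ∀ y ∈ t, F (x, y) ≤ K * ∫ u in s', F (u, y) ∂μ) :
    ∫ z in s ×ˢ t, F z ∂(μ.prod ν) ≤ K * μ.real s * ∫ z in s' ×ˢ t, F z ∂(μ.prod ν) := by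
  have hF'' : Integrable F ((μ.restrict s').prod (ν.restrict t)) := by
    rwa [Measure.prod_restrict]
  have : IsFiniteMeasure (μ.restrict s) := isFiniteMeasure_restrict.mpr hμs
  have hG : IntegrableOn (fun z : α × β => K * ∫ u in s', F (u, z.2) ∂μ) (s ×ˢ t) (μ.prod ν) := by
    rw [IntegrableOn, ← Measure.prod_restrict]
    exact (hF''.integral_prod_right.comp_snd (μ.restrict s)).const_mul K
  calc ∫ z in s ×ˢ t, F z ∂(μ.prod ν)
      ≤ ∫ z in s ×ˢ t, K * ∫ u in s', F (u, z.2) ∂μ ∂(μ.prod ν) :=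
        setIntegral_mono_on hF hG (hs.prod ht) fun z hz => hle z.1 hz.1 z.2 hz.2
    _ = K * μ.real s * ∫ z in s' ×ˢ t, F z ∂(μ.prod ν) := by
        rw [← Measure.prod_restrict, integral_const_mul,
          integral_fun_snd (fun y => ∫ u in s', F (u, y) ∂μ), ← Measure.prod_restrict,
          integral_prod_symm _ hF'']
        simp only [MeasurableSet.univ, measureReal_restrict_apply, univ_inter, smul_eq_mul,
          mul_assoc]

namespace Poly2

variable {p : ℕ} {g : ℝ → ℝ → ℝ}

lemma continuous (hg : Poly2 p g) : Continuous fun z : ℝ × ℝ => g z.1 z.2 := by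
  obtain ⟨c, hc⟩ := hg
  simp_rw [hc]
  fun_prop

lemma integrableOn_sq (hg : Poly2 p g) {s : Set (ℝ × ℝ)} (hs : IsCompact s) :
    IntegrableOn (fun z : ℝ × ℝ => g z.1 z.2 ^ 2) s :=
  (hg.continuous.pow 2).continuousOn.integrableOn_compact hs

lemma exists_polynomial_fiber (hg : Poly2 p g) :
    ∃ q : ℝ → ℝ[X], (∀ y, (q y).natDegree ≤ p) ∧ ∀ x y, g x y = (q y).eval x := by
  obtain ⟨c, hc⟩ := hg
  refine ⟨fun y => ∑ i : Fin (p + 1), ∑ j : Fin (p + 1), C (c i j * y ^ (j : ℕ)) * X ^ (i : ℕ),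
    fun y => ?_, fun x y => ?_⟩
  · refine natDegree_sum_le_of_forall_le _ _ fun i _ => natDegree_sum_le_of_forall_le _ _ fun j _ =>
      (natDegree_C_mul_X_pow_le _ _).trans (Nat.lt_succ_iff.mp i.isLt)
  · simp only [hc, eval_finsetSum, eval_mul, eval_C, eval_pow, eval_X]
    exact Finset.sum_congr rfl fun i _ => Finset.sum_congr rfl fun j _ => by ring

lemma sq_le_integral (hg : Poly2 p g) {x : ℝ} (hx : x ∈ Icc (0 : ℝ) 1) (y : ℝ) :
    g x y ^ 2 ≤ 12 * (p + 1) ^ 2 * ∫ u in (0 : ℝ)..1, g u y ^ 2 := by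
  obtain ⟨q, hq, hgq⟩ := hg.exists_polynomial_fiber
  simpa only [hgq] using (q y).sq_eval_le_integral (hq y) hx

lemma integral_sq_Ioo_prod_le (hg : Poly2 p g) {δ : ℝ} (hδ : δ ∈ Icc (0 : ℝ) 1) :
    ∫ z in Ioo (0 : ℝ) δ ×ˢ Ioo (0 : ℝ) 1, g z.1 z.2 ^ 2
      ≤ 12 * (p + 1) ^ 2 * δ * ∫ z in Icc (0 : ℝ) 1 ×ˢ Icc (0 : ℝ) 1, g z.1 z.2 ^ 2 := by
  have hint := hg.integrableOn_sq (isCompact_Icc.prod isCompact_Icc :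
    IsCompact (Icc (0 : ℝ) 1 ×ˢ Icc (0 : ℝ) 1))
  have hle := setIntegral_prod_le_mul_measureReal (μ := volume) (ν := volume)
    (F := fun z => g z.1 z.2 ^ 2) (s' := Ioc 0 1) (K := 12 * (p + 1) ^ 2)
    measurableSet_Ioo measurableSet_Ioo measure_Ioo_lt_top.ne
    (hint.mono_set (prod_mono (Ioo_subset_Icc_self.trans (Icc_subset_Icc le_rfl hδ.2))
      Ioo_subset_Icc_self))
    (hint.mono_set (prod_mono Ioc_subset_Icc_self Ioo_subset_Icc_self))
    fun x hx y _ => by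
      simpa only [← intervalIntegral.integral_of_le zero_le_one] using
        hg.sq_le_integral ⟨hx.1.le, hx.2.le.trans hδ.2⟩ y
  rw [← Measure.volume_eq_prod, Real.volume_real_Ioo_of_le hδ.1, sub_zero] at hle
  refine hle.trans (mul_le_mul_of_nonneg_left (setIntegral_mono_set hint ?_ ?_)
    (mul_nonneg (by positivity) hδ.1))
  · exact Filter.Eventually.of_forall fun z => sq_nonneg _
  · exact (prod_mono Ioc_subset_Icc_self Ioo_subset_Icc_self).eventuallyLE

lemma sqrt_integral_sq_Ioo_prod_le (hg : Poly2 p g) (hp : 1 ≤ p) {δ : ℝ}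
    (hδ : δ ∈ Icc (0 : ℝ) 1) :
    √(∫ z in Ioo (0 : ℝ) δ ×ˢ Ioo (0 : ℝ) 1, g z.1 z.2 ^ 2)
      ≤ 7 * p * √δ * L2two g (Icc 0 1 ×ˢ Icc 0 1) := by
  have hsq : 0 ≤ ∫ z in Icc (0 : ℝ) 1 ×ˢ Icc (0 : ℝ) 1, g z.1 z.2 ^ 2 :=
    setIntegral_nonneg (measurableSet_Icc.prod measurableSet_Icc) fun z _ => sq_nonneg _
  have hcoef : 12 * ((p : ℝ) + 1) ^ 2 ≤ (7 * p) ^ 2 := by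
    have hp' : (1 : ℝ) ≤ p := by exact_mod_cast hp
    nlinarith
  calc _ ≤ √((7 * p * √δ) ^ 2 * ∫ z in Icc (0 : ℝ) 1 ×ˢ Icc (0 : ℝ) 1, g z.1 z.2 ^ 2) := by
        refine Real.sqrt_le_sqrt ((hg.integral_sq_Ioo_prod_le hδ).trans ?_)
        rw [mul_pow, Real.sq_sqrt hδ.1]
        exact mul_le_mul_of_nonneg_right (mul_le_mul_of_nonneg_right hcoef hδ.1) hsq
    _ = 7 * p * √δ * L2two g (Icc 0 1 ×ˢ Icc 0 1) := by
        rw [Real.sqrt_mul (sq_nonneg _), Real.sqrt_sq (by positivity), L2two]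

end Poly2

/-- a 2D strengthened Cauchy-Schwarz inequality for polynomials. -/
theorem statement15 :
    ∃ C : ℝ, 0 < C ∧
      ∀ p : ℕ, 1 ≤ p →
      ∀ δ : ℝ, δ ∈ Ioc (0:ℝ) 1 →
      ∀ π₁ π₂ : ℝ → ℝ → ℝ, Poly2 p π₁ → Poly2 p π₂ →
        (∫ z in (Ioo (0:ℝ) δ ×ˢ Ioo (0:ℝ) 1), |π₁ z.1 z.2 * π₂ z.1 z.2|)
          ≤ C * p * Real.sqrt δ
              * L2two π₁ (Icc (0:ℝ) 1 ×ˢ Icc (0:ℝ) 1)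
              * L2two π₂ (Icc (0:ℝ) δ ×ˢ Icc (0:ℝ) 1) := by
  refine ⟨7, by norm_num, fun p hp δ hδ π₁ π₂ h₁ h₂ => ?_⟩
  have hsub : Ioo (0 : ℝ) δ ×ˢ Ioo (0 : ℝ) 1 ⊆ Icc 0 δ ×ˢ Icc 0 1 :=
    prod_mono Ioo_subset_Icc_self Ioo_subset_Icc_self
  have hrect {g : ℝ → ℝ → ℝ} (hg : Poly2 p g) :
      IntegrableOn (fun z : ℝ × ℝ => g z.1 z.2 ^ 2) (Icc 0 δ ×ˢ Icc 0 1) :=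
    hg.integrableOn_sq (isCompact_Icc.prod isCompact_Icc)
  have hmemLp {g : ℝ → ℝ → ℝ} (hg : Poly2 p g) :
      MemLp (fun z : ℝ × ℝ => g z.1 z.2) 2 (volume.restrict (Ioo 0 δ ×ˢ Ioo 0 1)) :=
    (memLp_two_iff_integrable_sq hg.continuous.aestronglyMeasurable).2 ((hrect hg).mono_set hsub)
  calc _ ≤ √(∫ z in Ioo (0 : ℝ) δ ×ˢ Ioo (0 : ℝ) 1, π₁ z.1 z.2 ^ 2)
        * √(∫ z in Ioo (0 : ℝ) δ ×ˢ Ioo (0 : ℝ) 1, π₂ z.1 z.2 ^ 2) :=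
        integral_abs_mul_le_sqrt_mul_sqrt (hmemLp h₁) (hmemLp h₂)
    _ ≤ _ := mul_le_mul (h₁.sqrt_integral_sq_Ioo_prod_le hp (Ioc_subset_Icc_self hδ))
          (Real.sqrt_le_sqrt (setIntegral_mono_set (hrect h₂)
            (Filter.Eventually.of_forall fun z => sq_nonneg _) hsub.eventuallyLE))
          (Real.sqrt_nonneg _) (mul_nonneg (by positivity) (Real.sqrt_nonneg _))
end
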